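/- arXiv:2409.01619 — 7 statements merged into one kernel-verified Lean document; each statement's English description precedes it below -/
import Mathlib

section
/- Let (A, ≻) be a Zinbiel algebra with a derivation D, and define a◁b := D(b)≻a and a▷b := a≻D(b). Then (A, ◁, ▷, ≻) is a pre-differential Novikov-Poisson algebra; in particular (A, ◁, ▷) is a pre-Novikov algebra, and the compatibility identities (a≻b + b≻a)▷c = a≻(b▷c), (a≻c)◁b = a≻(c◁b) = (a◁b + a▷b)≻c, a▷(b≻c) = (a◁b + a▷b)≻c + b≻(a▷c), and c◁(a≻b + b≻a) = b≻(c◁a) + a≻(c◁b) hold for all a, b, c ∈ A. -/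
/-- A Zinbiel algebra with a derivation gives a pre-differential Novikov-Poisson
algebra via `a◁b := D(b)≻a` and `a▷b := a≻D(b)`. -/
theorem stmt2 {k A : Type*} [Field k] [CharZero k] [AddCommGroup A] [Module k A]
    (succ : A →ₗ[k] A →ₗ[k] A) (D : A →ₗ[k] A)
    -- (A, ≻) is a Zinbiel algebra
    (hzin : ∀ a b c : A, succ a (succ b c) = succ (succ b a + succ a b) c)
    -- D is a derivation of (A, ≻)
    (hD : ∀ a b : A, D (succ a b) = succ (D a) b + succ a (D b))
    (lhd rhd : A →ₗ[k] A →ₗ[k] A)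
    (hlhd : ∀ a b : A, lhd a b = succ (D b) a)
    (hrhd : ∀ a b : A, rhd a b = succ a (D b)) :
    -- (A, ◁, ▷) is a pre-Novikov algebra:
    (∀ a b c : A, rhd a (rhd b c)
      = rhd (rhd a b + lhd a b) c + rhd b (rhd a c) - rhd (rhd b a + lhd b a) c) ∧
    (∀ a b c : A, rhd a (lhd b c)
      = lhd (rhd a b) c + lhd b (lhd a c + rhd a c) - lhd (lhd b a) c) ∧
    (∀ a b c : A, rhd (lhd a b + rhd a b) c = lhd (rhd a c) b) ∧
    (∀ a b c : A, lhd (lhd a b) c = lhd (lhd a c) b) ∧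
    -- pre-differential Novikov-Poisson compatibilities:
    (∀ a b c : A, rhd (succ a b + succ b a) c = succ a (rhd b c)) ∧
    (∀ a b c : A, lhd (succ a c) b = succ a (lhd c b)) ∧
    (∀ a b c : A, succ a (lhd c b) = succ (lhd a b + rhd a b) c) ∧
    (∀ a b c : A, rhd a (succ b c) = succ (lhd a b + rhd a b) c + succ b (rhd a c)) ∧
    (∀ a b c : A, lhd c (succ a b + succ b a) = succ b (lhd c a) + succ a (lhd c b)) := by
  refine ⟨?_, ?_, ?_, ?_, ?_, ?_, ?_, ?_, ?_⟩ <;> intro a b c <;>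
    simp only [hlhd, hrhd, hD, map_add, LinearMap.add_apply, hzin] <;> abel
end

section
/- Let (A, ⋄, ≻) be a pre-Poisson algebra. Define [a,b] := a⋄b − b⋄a and a·b := a≻b + b≻a. Then (A, ·, [·,·]) is a Poisson algebra: (A, ·) is commutative associative, (A, [·,·]) is a Lie algebra, and [a, b·c] = [a,b]·c + b·[a,c] for all a, b, c ∈ A. -/
/-- The associated Poisson algebra of a pre-Poisson algebra:
`[a,b] := a⋄b − b⋄a` and `a·b := a≻b + b≻a` make `A` a Poisson algebra. -/
theorem stmt3 {k A : Type*} [Field k] [CharZero k] [AddCommGroup A] [Module k A]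
    (dia succ : A →ₗ[k] A →ₗ[k] A)
    -- (A, ⋄) is left-symmetric
    (hlsym : ∀ a b c : A, dia (dia a b) c - dia a (dia b c)
      = dia (dia b a) c - dia b (dia a c))
    -- (A, ≻) is Zinbiel
    (hzin : ∀ a b c : A, succ a (succ b c) = succ (succ b a + succ a b) c)
    -- pre-Poisson compatibilities
    (hpp1 : ∀ a b c : A, succ (dia a b - dia b a) c = dia a (succ b c) - succ b (dia a c))
    (hpp2 : ∀ a b c : A, dia (succ a b + succ b a) c = succ a (dia b c) + succ b (dia a c))
    (br mul : A →ₗ[k] A →ₗ[k] A)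
    (hbr : ∀ a b : A, br a b = dia a b - dia b a)
    (hmul : ∀ a b : A, mul a b = succ a b + succ b a) :
    -- (A, ·) is commutative associative:
    (∀ a b : A, mul a b = mul b a) ∧
    (∀ a b c : A, mul (mul a b) c = mul a (mul b c)) ∧
    -- (A, [·,·]) is a Lie algebra:
    (∀ a b : A, br a b = - br b a) ∧
    (∀ a b c : A, br (br a b) c + br (br b c) a + br (br c a) b = 0) ∧
    -- Leibniz rule:
    (∀ a b c : A, br a (mul b c) = mul (br a b) c + mul b (br a c)) := by
  refine ⟨?_, ?_, ?_, ?_, ?_⟩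
  · intro a b
    rw [hmul, hmul]; abel
  · intro a b c
    simp only [hmul, map_add, LinearMap.add_apply, hzin, map_add, LinearMap.add_apply]
    abel
  · intro a b
    rw [hbr, hbr]; abel
  · intro a b c
    simp only [hbr, map_sub, LinearMap.sub_apply]
    linear_combination (norm := abel) hlsym a b c + hlsym b c a + hlsym c a b
  · intro a b c
    have h1 := hpp1 a b c
    have h2 := hpp1 a c b
    have h3 := hpp2 b c a
    simp only [map_add, map_sub, LinearMap.add_apply, LinearMap.sub_apply] at h1 h2 h3
    simp only [hbr, hmul, map_add, map_sub, LinearMap.add_apply, LinearMap.sub_apply]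
    linear_combination (norm := abel) -h1 - h2 - h3
end

section
/- Let (A, ◁, ▷, ≻, ⋄) be a pre-Poisson-Gel'fand-Dorfman algebra. Define a∘b := a◁b + a▷b, a·b := a≻b + b≻a, and [a,b] := a⋄b − b⋄a. Then (A, ∘, ·, [·,·]) is a Poisson-Gel'fand-Dorfman algebra: (A, ∘, [·,·]) is a Gel'fand-Dorfman algebra, (A, ·, [·,·]) is a Poisson algebra, and (A, ∘, ·) is a differential Novikov-Poisson algebra. -/
/-- A pre-Poisson-Gel'fand-Dorfman algebra gives a Poisson-Gel'fand-Dorfman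
algebra via `a∘b := a◁b + a▷b`, `a·b := a≻b + b≻a`, `[a,b] := a⋄b − b⋄a`. -/
theorem stmt4 {k A : Type*} [Field k] [CharZero k] [AddCommGroup A] [Module k A]
    (lhd rhd succ dia : A →ₗ[k] A →ₗ[k] A)
    -- pre-Novikov axioms for (◁, ▷)
    (hpn1 : ∀ a b c : A, rhd a (rhd b c)
      = rhd (rhd a b + lhd a b) c + rhd b (rhd a c) - rhd (rhd b a + lhd b a) c)
    (hpn2 : ∀ a b c : A, rhd a (lhd b c)
      = lhd (rhd a b) c + lhd b (lhd a c + rhd a c) - lhd (lhd b a) c)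
    (hpn3 : ∀ a b c : A, rhd (lhd a b + rhd a b) c = lhd (rhd a c) b)
    (hpn4 : ∀ a b c : A, lhd (lhd a b) c = lhd (lhd a c) b)
    -- (A, ≻) is Zinbiel
    (hzin : ∀ a b c : A, succ a (succ b c) = succ (succ b a + succ a b) c)
    -- (A, ⋄) is left-symmetric
    (hlsym : ∀ a b c : A, dia (dia a b) c - dia a (dia b c)
      = dia (dia b a) c - dia b (dia a c))
    -- pre-GD compatibilities
    (hgd1 : ∀ a b c : A, lhd c (dia a b - dia b a) - dia a (lhd c b) - lhd (dia b c) a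
      = - dia b (lhd c a) - lhd (dia a c) b)
    (hgd2 : ∀ a b c : A, rhd (dia a b - dia b a) c + dia (lhd a b + rhd a b) c
      = rhd a (dia b c) - dia b (rhd a c) + lhd (dia a c) b)
    -- pre-differential Novikov-Poisson compatibilities
    (hc1 : ∀ a b c : A, rhd (succ a b + succ b a) c = succ a (rhd b c))
    (hc2 : ∀ a b c : A, lhd (succ a c) b = succ a (lhd c b))
    (hc3 : ∀ a b c : A, succ a (lhd c b) = succ (lhd a b + rhd a b) c)
    (hc4 : ∀ a b c : A, rhd a (succ b c) = succ (lhd a b + rhd a b) c + succ b (rhd a c))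
    (hc5 : ∀ a b c : A, lhd c (succ a b + succ b a) = succ b (lhd c a) + succ a (lhd c b))
    -- pre-Poisson compatibilities
    (hpp1 : ∀ a b c : A, succ (dia a b - dia b a) c = dia a (succ b c) - succ b (dia a c))
    (hpp2 : ∀ a b c : A, dia (succ a b + succ b a) c = succ a (dia b c) + succ b (dia a c))
    (circ mul br : A →ₗ[k] A →ₗ[k] A)
    (hcirc : ∀ a b : A, circ a b = lhd a b + rhd a b)
    (hmul : ∀ a b : A, mul a b = succ a b + succ b a)
    (hbr : ∀ a b : A, br a b = dia a b - dia b a) :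
    -- (A, ∘, [·,·]) is a Gel'fand-Dorfman algebra:
    (∀ a b c : A, circ (circ a b) c - circ a (circ b c)
      = circ (circ b a) c - circ b (circ a c)) ∧
    (∀ a b c : A, circ (circ a b) c = circ (circ a c) b) ∧
    (∀ a b : A, br a b = - br b a) ∧
    (∀ a b c : A, br (br a b) c + br (br b c) a + br (br c a) b = 0) ∧
    (∀ a b c : A, br (circ a b) c - br (circ a c) b + circ (br a b) c
      - circ (br a c) b - circ a (br b c) = 0) ∧
    -- (A, ·, [·,·]) is a Poisson algebra:
    (∀ a b : A, mul a b = mul b a) ∧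
    (∀ a b c : A, mul (mul a b) c = mul a (mul b c)) ∧
    (∀ a b c : A, br a (mul b c) = mul (br a b) c + mul b (br a c)) ∧
    -- (A, ∘, ·) is a differential Novikov-Poisson algebra:
    (∀ a b c : A, circ (mul a b) c = mul a (circ b c)) ∧
    (∀ a b c : A, circ a (mul b c) = mul (circ a b) c + mul b (circ a c)) := by
  simp only [map_add, map_sub, LinearMap.add_apply, LinearMap.sub_apply]
    at hpn1 hpn2 hpn3 hpn4 hzin hlsym hgd1 hgd2 hc1 hc2 hc3 hc4 hc5 hpp1 hpp2
  refine ⟨?_, ?_, ?_, ?_, ?_, ?_, ?_, ?_, ?_, ?_⟩ <;>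
    intro a b <;> (try intro c) <;>
    simp only [hcirc, hmul, hbr, map_add, map_sub, LinearMap.add_apply,
      LinearMap.sub_apply]
  · linear_combination (norm := module) - hpn1 a b c - hpn2 a b c + hpn2 b a c
  · linear_combination (norm := module) hpn3 a b c - hpn3 a c b + hpn4 a b c
  · module
  · linear_combination (norm := module) hlsym a b c - hlsym a c b + hlsym b c a
  · linear_combination (norm := module) - hgd1 b c a + hgd2 a b c - hgd2 a c b
  · module
  · linear_combination (norm := module)
      - hzin a b c - hzin a c b + hzin c a b + hzin c b a
  · linear_combination (norm := module) - hpp1 a b c - hpp1 a c b - hpp2 b c a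
  · linear_combination (norm := module)
      hc1 a b c + hc2 a c b + hc2 b c a + hc3 b c a
  · linear_combination (norm := module) hc4 a b c + hc4 a c b + hc5 b c a
end

section
/- Let (A, ◁, ▷) be a pre-Novikov algebra and define a∘b := a◁b + a▷b. Then (A, ∘) is a Novikov algebra, i.e., it is left-symmetric ((a∘b)∘c − a∘(b∘c) = (b∘a)∘c − b∘(a∘c)) and satisfies (a∘b)∘c = (a∘c)∘b for all a, b, c ∈ A. -/
/-- For a pre-Novikov algebra `(A, ◁, ▷)`, the operation `a∘b := a◁b + a▷b`
defines a Novikov algebra. -/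
theorem stmt5 {k A : Type*} [Field k] [CharZero k] [AddCommGroup A] [Module k A]
    (lhd rhd : A →ₗ[k] A →ₗ[k] A)
    (hpn1 : ∀ a b c : A, rhd a (rhd b c)
      = rhd (rhd a b + lhd a b) c + rhd b (rhd a c) - rhd (rhd b a + lhd b a) c)
    (hpn2 : ∀ a b c : A, rhd a (lhd b c)
      = lhd (rhd a b) c + lhd b (lhd a c + rhd a c) - lhd (lhd b a) c)
    (hpn3 : ∀ a b c : A, rhd (lhd a b + rhd a b) c = lhd (rhd a c) b)
    (hpn4 : ∀ a b c : A, lhd (lhd a b) c = lhd (lhd a c) b)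
    (circ : A →ₗ[k] A →ₗ[k] A)
    (hcirc : ∀ a b : A, circ a b = lhd a b + rhd a b) :
    (∀ a b c : A, circ (circ a b) c - circ a (circ b c)
      = circ (circ b a) c - circ b (circ a c)) ∧
    (∀ a b c : A, circ (circ a b) c = circ (circ a c) b) := by
  simp only [map_add, LinearMap.add_apply] at hpn1 hpn2 hpn3
  constructor
  · intro a b c
    simp only [hcirc, map_add, LinearMap.add_apply]
    linear_combination (norm := module) -hpn1 a b c - hpn2 a b c + hpn2 b a c
  · intro a b c
    simp only [hcirc, map_add, LinearMap.add_apply]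
    linear_combination (norm := module) hpn3 a b c - hpn3 a c b + hpn4 a b c
end

section
/- Let (A, ◁, ▷, ≻) be a pre-differential Novikov-Poisson algebra. Define a∘b := a◁b + a▷b and a·b := a≻b + b≻a. Then (A, ∘, ·) is a differential Novikov-Poisson algebra: (A, ∘) is Novikov, (A, ·) is commutative associative, and (a·b)∘c = a·(b∘c) and a∘(b·c) = (a∘b)·c + b·(a∘c) hold for all a, b, c ∈ A. -/
/-- A pre-differential Novikov-Poisson algebra gives a differential
Novikov-Poisson algebra via `a∘b := a◁b + a▷b` and `a·b := a≻b + b≻a`. -/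
theorem stmt6 {k A : Type*} [Field k] [CharZero k] [AddCommGroup A] [Module k A]
    (lhd rhd succ : A →ₗ[k] A →ₗ[k] A)
    -- pre-Novikov axioms
    (hpn1 : ∀ a b c : A, rhd a (rhd b c)
      = rhd (rhd a b + lhd a b) c + rhd b (rhd a c) - rhd (rhd b a + lhd b a) c)
    (hpn2 : ∀ a b c : A, rhd a (lhd b c)
      = lhd (rhd a b) c + lhd b (lhd a c + rhd a c) - lhd (lhd b a) c)
    (hpn3 : ∀ a b c : A, rhd (lhd a b + rhd a b) c = lhd (rhd a c) b)
    (hpn4 : ∀ a b c : A, lhd (lhd a b) c = lhd (lhd a c) b)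
    -- Zinbiel axiom
    (hzin : ∀ a b c : A, succ a (succ b c) = succ (succ b a + succ a b) c)
    -- pre-differential Novikov-Poisson compatibilities
    (hc1 : ∀ a b c : A, rhd (succ a b + succ b a) c = succ a (rhd b c))
    (hc2 : ∀ a b c : A, lhd (succ a c) b = succ a (lhd c b))
    (hc3 : ∀ a b c : A, succ a (lhd c b) = succ (lhd a b + rhd a b) c)
    (hc4 : ∀ a b c : A, rhd a (succ b c) = succ (lhd a b + rhd a b) c + succ b (rhd a c))
    (hc5 : ∀ a b c : A, lhd c (succ a b + succ b a) = succ b (lhd c a) + succ a (lhd c b))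
    (circ mul : A →ₗ[k] A →ₗ[k] A)
    (hcirc : ∀ a b : A, circ a b = lhd a b + rhd a b)
    (hmul : ∀ a b : A, mul a b = succ a b + succ b a) :
    -- (A, ∘) is Novikov
    (∀ a b c : A, circ (circ a b) c - circ a (circ b c)
      = circ (circ b a) c - circ b (circ a c)) ∧
    (∀ a b c : A, circ (circ a b) c = circ (circ a c) b) ∧
    -- (A, ·) is commutative associative
    (∀ a b : A, mul a b = mul b a) ∧
    (∀ a b c : A, mul (mul a b) c = mul a (mul b c)) ∧
    -- differential Novikov-Poisson compatibilities
    (∀ a b c : A, circ (mul a b) c = mul a (circ b c)) ∧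
    (∀ a b c : A, circ a (mul b c) = mul (circ a b) c + mul b (circ a c)) := by
  refine ⟨?_, ?_, ?_, ?_, ?_, ?_⟩
  · intro a b c
    have h1 := hpn1 a b c; have h2 := hpn2 a b c; have h3 := hpn2 b a c
    simp only [hcirc, map_add, LinearMap.add_apply] at h1 h2 h3 ⊢
    linear_combination (norm := module) (-1 : ℤ) • h1 - h2 + h3
  · intro a b c
    have h1 := hpn4 a b c; have h2 := hpn3 a b c; have h3 := hpn3 a c b
    simp only [hcirc, map_add, LinearMap.add_apply] at h1 h2 h3 ⊢
    linear_combination (norm := module) h1 + h2 - h3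
  · intro a b
    rw [hmul, hmul, add_comm]
  · intro a b c
    have h1 := hzin a b c; have h2 := hzin a c b
    have h3 := hzin c a b; have h4 := hzin c b a
    simp only [hmul, map_add, LinearMap.add_apply] at h1 h2 h3 h4 ⊢
    linear_combination (norm := module) (-1 : ℤ) • h1 - h2 + h3 + h4
  · intro a b c
    have h1 := hc1 a b c; have h2 := hc2 a c b; have h3 := hc2 b c a
    have h4 := hc3 b c a
    simp only [hcirc, hmul, map_add, LinearMap.add_apply] at h1 h2 h3 h4 ⊢
    linear_combination (norm := module) h1 + h2 + h3 + h4
  · intro a b c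
    have h1 := hc5 b c a; have h2 := hc4 a b c; have h3 := hc4 a c b
    simp only [hcirc, hmul, map_add, LinearMap.add_apply] at h1 h2 h3 ⊢
    linear_combination (norm := module) h1 + h2 + h3
end

section
/- Let A be a vector space over a field k of characteristic 0 with binary operations ·, ∘, [·,·], ⋆, and let P = k[∂] ⊗ A be the free k[∂]-module on A. Define the λ-operations on generators by [a_λ b] := ∂(b∘a) + λ(b⋆a) + [a,b] and a_λ b := a·b for a, b ∈ A (extended by the conformal sesquilinearity rules). Then (P, [·_λ·], ·_λ·) is a Poisson conformal algebra if and only if (A, ∘, ·, [·,·]) is a Poisson-Gel'fand-Dorfman algebra and a⋆b = a∘b + b∘a for all a, b ∈ A. -/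
noncomputable section

/-! ## A framework for conformal algebras.

A `k[∂]`-module is encoded as a `k`-module `P` with an endomorphism `D` (the
action of `∂`).  A `λ`-product is encoded by its family of coefficients
`m : ℕ → P → P → P`, so that `a_λ b = ∑ λⁿ (m n a b)`; `cev m T a b`
evaluates this family at `λ := T` for an operator `T` (e.g. `T = λ•1`, or
`T = -λ•1 - D` for the substitution `λ ↦ -λ-∂`).  Since `k` has
characteristic zero (hence is infinite), identities of polynomials in
`λ, μ` are equivalent to their evaluated versions at all scalars. -/

variable {k : Type*} [Field k]

/-- The scalar operator `c • id`. -/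
def sc {P : Type*} [AddCommGroup P] [Module k P] (c : k) : Module.End k P := c • 1

/-- Evaluation of a coefficient family at the operator `T`:
`cev m T a b = ∑ Tⁿ (m n a b)`. -/
noncomputable def cev {P V W : Type*} [AddCommGroup W] [Module k W]
    (m : ℕ → P → V → W) (T : Module.End k W) (a : P) (v : V) : W :=
  ∑ᶠ n, (T ^ n) (m n a v)

/-- The coefficient family is `k`-bilinear. -/
def BilinMap (k : Type*) {A B C : Type*} [Field k] [AddCommGroup A] [Module k A]
    [AddCommGroup B] [Module k B] [AddCommGroup C] [Module k C]
    (m : ℕ → A → B → C) : Prop :=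
  ∀ (n : ℕ) (a a' : A) (b b' : B) (r : k),
    m n (a + a') b = m n a b + m n a' b ∧ m n (r • a) b = r • m n a b ∧
    m n a (b + b') = m n a b + m n a b' ∧ m n a (r • b) = r • m n a b

/-- Each `λ`-product takes values in polynomials in `λ`. -/
def FinSuppFam {A B C : Type*} [Zero C] (m : ℕ → A → B → C) : Prop :=
  ∀ a b, (Function.support fun n => m n a b).Finite

/-- The conformal sesquilinearity axioms:
`(∂a)_λ v = −λ a_λ v` and `a_λ (∂v) = (∂+λ) (a_λ v)`. -/
def ConfSesq {P V : Type*} [AddCommGroup P] [Module k P] [AddCommGroup V] [Module k V]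
    (DP : Module.End k P) (DV : Module.End k V) (m : ℕ → P → V → V) : Prop :=
  ∀ (lam : k) (a : P) (v : V),
    cev m (sc lam) (DP a) v = (-lam) • cev m (sc lam) a v ∧
    cev m (sc lam) a (DV v) = DV (cev m (sc lam) a v) + lam • cev m (sc lam) a v

/-- `(P, D, m)` is a Lie conformal algebra. -/
def IsLieConf {P : Type*} [AddCommGroup P] [Module k P]
    (D : Module.End k P) (m : ℕ → P → P → P) : Prop :=
  BilinMap k m ∧ FinSuppFam m ∧ ConfSesq D D m ∧
  (∀ (lam : k) (a b : P), cev m (sc lam) a b = - cev m (-(sc lam) - D) b a) ∧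
  (∀ (lam mu : k) (a b c : P),
    cev m (sc lam) a (cev m (sc mu) b c) =
      cev m (sc (lam + mu)) (cev m (sc lam) a b) c + cev m (sc mu) b (cev m (sc lam) a c))

/-- `(P, D, m)` is a commutative associative conformal algebra. -/
def IsCommAssocConf {P : Type*} [AddCommGroup P] [Module k P]
    (D : Module.End k P) (m : ℕ → P → P → P) : Prop :=
  BilinMap k m ∧ FinSuppFam m ∧ ConfSesq D D m ∧
  (∀ (lam : k) (a b : P), cev m (sc lam) a b = cev m (-(sc lam) - D) b a) ∧
  (∀ (lam mu : k) (a b c : P),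
    cev m (sc (lam + mu)) (cev m (sc lam) a b) c = cev m (sc lam) a (cev m (sc mu) b c))

/-- `(P, D, br, mul)` is a Poisson conformal algebra. -/
def IsPoissonConf {P : Type*} [AddCommGroup P] [Module k P]
    (D : Module.End k P) (br mul : ℕ → P → P → P) : Prop :=
  IsLieConf D br ∧ IsCommAssocConf D mul ∧
  (∀ (lam mu : k) (a b c : P),
    cev br (sc lam) a (cev mul (sc mu) b c) =
      cev mul (sc (lam + mu)) (cev br (sc lam) a b) c +
      cev mul (sc mu) b (cev br (sc lam) a c))

end
noncomputable section
variable {k : Type*} [Field k]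

/-- `(A, circ)` is a Novikov algebra. -/
def IsNovikovAlg {A : Type*} [AddCommGroup A] [Module k A]
    (circ : A →ₗ[k] A →ₗ[k] A) : Prop :=
  (∀ a b c : A, circ (circ a b) c - circ a (circ b c)
    = circ (circ b a) c - circ b (circ a c)) ∧
  (∀ a b c : A, circ (circ a b) c = circ (circ a c) b)

/-- `(A, br)` is a Lie algebra. -/
def IsLieAlgBr {A : Type*} [AddCommGroup A] [Module k A]
    (br : A →ₗ[k] A →ₗ[k] A) : Prop :=
  (∀ a b : A, br a b = - br b a) ∧
  (∀ a b c : A, br (br a b) c + br (br b c) a + br (br c a) b = 0)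

/-- `(A, m)` is a commutative associative algebra. -/
def IsCommAssocAlg {A : Type*} [AddCommGroup A] [Module k A]
    (m : A →ₗ[k] A →ₗ[k] A) : Prop :=
  (∀ a b : A, m a b = m b a) ∧ (∀ a b c : A, m (m a b) c = m a (m b c))

/-- `(A, circ, br)` is a Gel'fand-Dorfman algebra. -/
def IsGDAlg {A : Type*} [AddCommGroup A] [Module k A]
    (circ br : A →ₗ[k] A →ₗ[k] A) : Prop :=
  IsNovikovAlg circ ∧ IsLieAlgBr br ∧
  ∀ a b c : A, br (circ a b) c - br (circ a c) b + circ (br a b) c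
    - circ (br a c) b - circ a (br b c) = 0

/-- `(A, m, br)` is a Poisson algebra. -/
def IsPoissonAlg {A : Type*} [AddCommGroup A] [Module k A]
    (m br : A →ₗ[k] A →ₗ[k] A) : Prop :=
  IsCommAssocAlg m ∧ IsLieAlgBr br ∧
  ∀ a b c : A, br a (m b c) = m (br a b) c + m b (br a c)

/-- `(A, circ, m)` is a differential Novikov-Poisson algebra. -/
def IsDNPAlg {A : Type*} [AddCommGroup A] [Module k A]
    (circ m : A →ₗ[k] A →ₗ[k] A) : Prop :=
  IsNovikovAlg circ ∧ IsCommAssocAlg m ∧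
  (∀ a b c : A, circ (m a b) c = m a (circ b c)) ∧
  (∀ a b c : A, circ a (m b c) = m (circ a b) c + m b (circ a c))

/-- `(A, circ, m, br)` is a Poisson-Gel'fand-Dorfman algebra. -/
def IsPGDAlg {A : Type*} [AddCommGroup A] [Module k A]
    (circ m br : A →ₗ[k] A →ₗ[k] A) : Prop :=
  IsGDAlg circ br ∧ IsPoissonAlg m br ∧ IsDNPAlg circ m

/-- The embedding `A → k[∂] ⊗ A` of the generators of the free `k[∂]`-module
on `A`, realized as `ℕ →₀ A`. -/
def emb (k : Type*) [Field k] (A : Type*) [AddCommGroup A] [Module k A] :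
    A →ₗ[k] ℕ →₀ A := Finsupp.lsingle 0

/-- The action of `∂` on the free `k[∂]`-module `k[∂] ⊗ A ≅ ℕ →₀ A`. -/
def shft (k : Type*) [Field k] (A : Type*) [AddCommGroup A] [Module k A] :
    Module.End k (ℕ →₀ A) := Finsupp.lmapDomain A k Nat.succ

end

/-! ### Auxiliary lemmas -/

noncomputable section AuxGen
variable {k : Type*} [Field k]

lemma sc_pow_apply {P : Type*} [AddCommGroup P] [Module k P] (c : k) (n : ℕ) (v : P) :
    ((sc c) ^ n) v = c ^ n • v := by
  simp [sc, smul_pow]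

lemma polyext {V : Type*} [AddCommGroup V] [Module k V] [CharZero k] (f : ℕ → V)
    (hf : (Function.support f).Finite) (h : ∀ t : k, ∑ᶠ n, t ^ n • f n = 0) :
    ∀ n, f n = 0 := by
  intro n
  by_cases hn : n ∈ hf.toFinset
  · rw [← Module.forall_dual_apply_eq_zero_iff k]
    intro φ
    set p : Polynomial k := ∑ i ∈ hf.toFinset, Polynomial.C (φ (f i)) * Polynomial.X ^ i with hp
    have hev : ∀ t : k, p.eval t = 0 := by
      intro t
      have h2 : ∑ᶠ n, t ^ n • f n = ∑ i ∈ hf.toFinset, t ^ i • f i := by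
        apply finsum_eq_finset_sum_of_support_subset
        intro j hj
        simp only [Function.mem_support] at hj
        simp only [Finset.coe_sort_coe, Set.Finite.coe_toFinset, Function.mem_support]
        intro hj0
        exact hj (by rw [hj0, smul_zero])
      have h3 := h t
      rw [h2] at h3
      have h4 := congrArg φ h3
      rw [map_sum, map_zero] at h4
      rw [hp, Polynomial.eval_finset_sum]
      rw [← h4]
      refine Finset.sum_congr rfl fun i _ => ?_
      rw [map_smul, smul_eq_mul, Polynomial.eval_mul, Polynomial.eval_C,
        Polynomial.eval_pow, Polynomial.eval_X, mul_comm]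
    have hp0 : p = 0 := Polynomial.funext (by simpa using hev)
    have := congrArg (fun q => Polynomial.coeff q n) hp0
    simp only [hp, Polynomial.finset_sum_coeff, Polynomial.coeff_C_mul,
      Polynomial.coeff_X_pow, Polynomial.coeff_zero, mul_ite, mul_one, mul_zero] at this
    rwa [Finset.sum_ite_eq hf.toFinset n (fun i => φ (f i)), if_pos hn] at this
  · simp only [Set.Finite.mem_toFinset, Function.mem_support, not_not] at hn
    exact hn

lemma poly1 {V : Type*} [AddCommGroup V] [Module k V] (c0 c1 : V)
    (h : ∀ t : k, c0 + t • c1 = 0) : c0 = 0 ∧ c1 = 0 := by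
  have h0 := h 0
  simp only [zero_smul, add_zero] at h0
  have h1 := h 1
  rw [h0, one_smul, zero_add] at h1
  exact ⟨h0, h1⟩

lemma poly2 {V : Type*} [AddCommGroup V] [Module k V] [CharZero k] (c0 c1 c2 : V)
    (h : ∀ t : k, c0 + t • c1 + t ^ 2 • c2 = 0) : c0 = 0 ∧ c1 = 0 ∧ c2 = 0 := by
  have h0 := h 0
  simp only [zero_smul, add_zero, zero_pow, OfNat.ofNat_ne_zero, ne_eq,
    not_false_eq_true] at h0
  have h1 := h 1
  have h2 := h 2
  rw [h0] at h1 h2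
  simp only [one_smul, one_pow, zero_add] at h1 h2
  have hc2 : (2 : k) • c2 = 0 := by linear_combination (norm := module) h2 - (2:k) • h1
  have hc2' : c2 = 0 := by
    rcases smul_eq_zero.mp hc2 with h | h
    · exact absurd h two_ne_zero
    · exact h
  refine ⟨h0, ?_, hc2'⟩
  rw [hc2', add_zero] at h1; exact h1

lemma poly22 {V : Type*} [AddCommGroup V] [Module k V] [CharZero k]
    (c00 c10 c20 c01 c02 c11 : V)
    (h : ∀ s t : k, c00 + s • c10 + s ^ 2 • c20 + t • c01 + t ^ 2 • c02
        + (s * t) • c11 = 0) :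
    c00 = 0 ∧ c10 = 0 ∧ c20 = 0 ∧ c01 = 0 ∧ c02 = 0 ∧ c11 = 0 := by
  have key : ∀ t : k, (c00 + t • c01 + t ^ 2 • c02) = 0 ∧ (c10 + t • c11) = 0 ∧ c20 = 0 := by
    intro t
    apply poly2 (k := k)
    intro s
    have := h s t
    linear_combination (norm := module) this
  have k2 : c20 = 0 := (key 0).2.2
  have k1 := poly1 c10 c11 (fun t => (key t).2.1)
  have k0 := poly2 c00 c01 c02 (fun t => (key t).1)
  exact ⟨k0.1, k1.1, k2, k0.2.1, k0.2.2, k1.2⟩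

section CevLemmas
variable {P : Type*} [AddCommGroup P] [Module k P] {m : ℕ → P → P → P}

lemma finsum_eq_range {f : ℕ → P} {N : ℕ} (h : ∀ n, n ∉ Finset.range N → f n = 0) :
    ∑ᶠ n, f n = ∑ n ∈ Finset.range N, f n := by
  apply finsum_eq_finset_sum_of_support_subset
  intro j hj
  simp only [Function.mem_support] at hj
  simp only [Finset.coe_sort_coe, Finset.mem_coe]
  by_contra hc
  exact hj (h j hc)

lemma cev_eq_sum (T : Module.End k P) {x y : P} {S : Finset ℕ}
    (hS : ∀ n, n ∉ S → m n x y = 0) :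
    cev m T x y = ∑ n ∈ S, (T ^ n) (m n x y) := by
  apply finsum_eq_finset_sum_of_support_subset
  intro j hj
  simp only [Function.mem_support] at hj
  simp only [Finset.coe_sort_coe, Finset.mem_coe]
  by_contra hc
  exact hj (by rw [hS j hc, map_zero])

lemma nmem_supp (hf : FinSuppFam m) (x y : P) :
    ∀ n, n ∉ (hf x y).toFinset → m n x y = 0 := by
  intro n hn
  simpa [Set.Finite.mem_toFinset, Function.mem_support, not_not] using hn

lemma cev_sc (hf : FinSuppFam m) (t : k) (x y : P) :
    cev m (sc t) x y = ∑ᶠ n, t ^ n • m n x y := by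
  exact finsum_congr fun n => sc_pow_apply t n (m n x y)

lemma cev_add_right (hb : BilinMap k m) (hf : FinSuppFam m) (T : Module.End k P)
    (x y y' : P) : cev m T x (y + y') = cev m T x y + cev m T x y' := by
  classical
  have hy : ∀ n, n ∉ (hf x y).toFinset ∪ (hf x y').toFinset → m n x y = 0 := by
    intro n hn
    rw [Finset.mem_union] at hn
    push_neg at hn
    exact nmem_supp hf x y n hn.1
  have hy' : ∀ n, n ∉ (hf x y).toFinset ∪ (hf x y').toFinset → m n x y' = 0 := by
    intro n hn
    rw [Finset.mem_union] at hn
    push_neg at hn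
    exact nmem_supp hf x y' n hn.2
  have hyy : ∀ n, n ∉ (hf x y).toFinset ∪ (hf x y').toFinset → m n x (y + y') = 0 := by
    intro n hn
    rw [(hb n x x y y' 0).2.2.1, hy n hn, hy' n hn, add_zero]
  rw [cev_eq_sum T hy, cev_eq_sum T hy', cev_eq_sum T hyy, ← Finset.sum_add_distrib]
  exact Finset.sum_congr rfl fun n _ => by rw [(hb n x x y y' 0).2.2.1, map_add]

lemma cev_add_left (hb : BilinMap k m) (hf : FinSuppFam m) (T : Module.End k P)
    (x x' y : P) : cev m T (x + x') y = cev m T x y + cev m T x' y := by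
  classical
  have hy : ∀ n, n ∉ (hf x y).toFinset ∪ (hf x' y).toFinset → m n x y = 0 := by
    intro n hn
    rw [Finset.mem_union] at hn
    push_neg at hn
    exact nmem_supp hf x y n hn.1
  have hy' : ∀ n, n ∉ (hf x y).toFinset ∪ (hf x' y).toFinset → m n x' y = 0 := by
    intro n hn
    rw [Finset.mem_union] at hn
    push_neg at hn
    exact nmem_supp hf x' y n hn.2
  have hyy : ∀ n, n ∉ (hf x y).toFinset ∪ (hf x' y).toFinset → m n (x + x') y = 0 := by
    intro n hn
    rw [(hb n x x' y y 0).1, hy n hn, hy' n hn, add_zero]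
  rw [cev_eq_sum T hy, cev_eq_sum T hy', cev_eq_sum T hyy, ← Finset.sum_add_distrib]
  exact Finset.sum_congr rfl fun n _ => by rw [(hb n x x' y y 0).1, map_add]

lemma cev_smul_right (hb : BilinMap k m) (hf : FinSuppFam m) (T : Module.End k P)
    (r : k) (x y : P) : cev m T x (r • y) = r • cev m T x y := by
  have hy := nmem_supp hf x y
  have hry : ∀ n, n ∉ (hf x y).toFinset → m n x (r • y) = 0 := by
    intro n hn
    rw [(hb n x x y y r).2.2.2, hy n hn, smul_zero]
  rw [cev_eq_sum T hy, cev_eq_sum T hry, Finset.smul_sum]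
  exact Finset.sum_congr rfl fun n _ => by rw [(hb n x x y y r).2.2.2, map_smul]

lemma cev_smul_left (hb : BilinMap k m) (hf : FinSuppFam m) (T : Module.End k P)
    (r : k) (x y : P) : cev m T (r • x) y = r • cev m T x y := by
  have hy := nmem_supp hf x y
  have hry : ∀ n, n ∉ (hf x y).toFinset → m n (r • x) y = 0 := by
    intro n hn
    rw [(hb n x x y y r).2.1, hy n hn, smul_zero]
  rw [cev_eq_sum T hy, cev_eq_sum T hry, Finset.smul_sum]
  exact Finset.sum_congr rfl fun n _ => by rw [(hb n x x y y r).2.1, map_smul]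

lemma cev_zero_right (hb : BilinMap k m) (hf : FinSuppFam m) (T : Module.End k P)
    (x : P) : cev m T x 0 = 0 := by
  have := cev_smul_right hb hf T (0 : k) x 0
  rwa [zero_smul, zero_smul] at this

lemma cev_zero_left (hb : BilinMap k m) (hf : FinSuppFam m) (T : Module.End k P)
    (y : P) : cev m T 0 y = 0 := by
  have := cev_smul_left hb hf T (0 : k) 0 y
  rwa [zero_smul, zero_smul] at this

lemma cev_coeff [CharZero k] (hf : FinSuppFam m) {x y : P} {g : ℕ → P}
    (hg : (Function.support g).Finite)
    (h : ∀ t : k, cev m (sc t) x y = ∑ᶠ n, t ^ n • g n) :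
    ∀ n, m n x y = g n := by
  classical
  intro n
  have hsub : (Function.support fun n => m n x y - g n).Finite :=
    ((hf x y).union hg).subset (Function.support_sub _ _)
  have key := polyext (k := k) (fun n => m n x y - g n) hsub ?_
  · have := key n
    exact sub_eq_zero.mp this
  intro t
  have hm : ∀ j, j ∉ (hf x y).toFinset ∪ hg.toFinset → m j x y = 0 := by
    intro j hj
    rw [Finset.mem_union] at hj
    push_neg at hj
    exact nmem_supp hf x y j hj.1
  have hgz : ∀ j, j ∉ (hf x y).toFinset ∪ hg.toFinset → g j = 0 := by
    intro j hj
    rw [Finset.mem_union] at hj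
    push_neg at hj
    have := hj.2
    simpa [Set.Finite.mem_toFinset, Function.mem_support, not_not] using this
  have e1 : ∑ᶠ j, t ^ j • (m j x y - g j)
      = ∑ j ∈ (hf x y).toFinset ∪ hg.toFinset, t ^ j • (m j x y - g j) := by
    apply finsum_eq_finset_sum_of_support_subset
    intro j hj
    simp only [Function.mem_support] at hj
    simp only [Finset.coe_sort_coe, Finset.mem_coe]
    by_contra hc
    exact hj (by rw [hm j hc, hgz j hc, sub_zero, smul_zero])
  have e2 : cev m (sc t) x y = ∑ j ∈ (hf x y).toFinset ∪ hg.toFinset, t ^ j • m j x y := by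
    rw [cev_eq_sum (sc t) hm]
    exact Finset.sum_congr rfl fun j _ => sc_pow_apply t j _
  have e3 : ∑ᶠ j, t ^ j • g j = ∑ j ∈ (hf x y).toFinset ∪ hg.toFinset, t ^ j • g j := by
    apply finsum_eq_finset_sum_of_support_subset
    intro j hj
    simp only [Function.mem_support] at hj
    simp only [Finset.coe_sort_coe, Finset.mem_coe]
    by_contra hc
    exact hj (by rw [hgz j hc, smul_zero])
  rw [e1]
  have h4 := h t
  rw [e2, e3] at h4
  calc ∑ j ∈ (hf x y).toFinset ∪ hg.toFinset, t ^ j • (m j x y - g j)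
      = ∑ j ∈ (hf x y).toFinset ∪ hg.toFinset, (t ^ j • m j x y - t ^ j • g j) :=
        Finset.sum_congr rfl fun j _ => smul_sub _ _ _
    _ = 0 := by rw [Finset.sum_sub_distrib, h4, sub_self]

end CevLemmas

def shiftF {P : Type*} [Zero P] (f : ℕ → P) : ℕ → P := fun n => Nat.rec 0 (fun i _ => f i) n

@[simp] lemma shiftF_zero {P : Type*} [Zero P] (f : ℕ → P) : shiftF f 0 = 0 := rfl

@[simp] lemma shiftF_succ {P : Type*} [Zero P] (f : ℕ → P) (n : ℕ) :
    shiftF f (n + 1) = f n := rfl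

section SesqLemmas
variable {P : Type*} [AddCommGroup P] [Module k P] {m : ℕ → P → P → P} [CharZero k]

lemma coeff_sesq_right {D : Module.End k P}
    (hf : FinSuppFam m) (hsq : ConfSesq D D m) (x y : P) :
    ∀ n, m n x (D y) = D (m n x y) + shiftF (fun i => m i x y) n := by
  apply cev_coeff (k := k) hf
  · apply ((hf x y).union ((hf x y).image Nat.succ)).subset
    intro n hn
    simp only [Function.mem_support] at hn
    by_contra hc
    simp only [Set.mem_union, Function.mem_support, Set.mem_image, not_or,
      not_exists, not_and] at hc
    apply hn
    have h1 : m n x y = 0 := not_not.mp hc.1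
    have h2 : shiftF (fun i => m i x y) n = 0 := by
      cases n with
      | zero => rfl
      | succ i =>
        rw [shiftF_succ]
        by_contra hi
        exact hc.2 i hi rfl
    rw [h1, h2, map_zero, add_zero]
  · intro t
    obtain ⟨N, hN⟩ := Finset.exists_nat_subset_range (hf x y).toFinset
    have hmono : Finset.range N ⊆ Finset.range (N + 1) :=
      Finset.range_subset_range.mpr (Nat.le_succ N)
    have hm0 : ∀ n, n ∉ Finset.range N → m n x y = 0 := fun n hn =>
      nmem_supp hf x y n fun hmem => hn (hN hmem)
    have hm0' : ∀ n, n ∉ Finset.range (N + 1) → m n x y = 0 := fun n hn =>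
      hm0 n fun h => hn (hmono h)
    have hg0 : ∀ n, n ∉ Finset.range (N + 1) →
        t ^ n • (D (m n x y) + shiftF (fun i => m i x y) n) = 0 := by
      intro n hn
      cases n with
      | zero => simp at hn
      | succ i =>
        have hi : i ∉ Finset.range N := fun hi =>
          hn (by rw [Finset.mem_range] at hi ⊢; omega)
        rw [hm0' _ hn, shiftF_succ, hm0 i hi, map_zero, add_zero, smul_zero]
    have e1 : ∑ᶠ n, t ^ n • (D (m n x y) + shiftF (fun i => m i x y) n)
        = ∑ n ∈ Finset.range (N + 1),
            t ^ n • (D (m n x y) + shiftF (fun i => m i x y) n) :=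
      finsum_eq_range hg0
    have e2 : cev m (sc t) x y = ∑ n ∈ Finset.range (N + 1), t ^ n • m n x y := by
      rw [cev_eq_sum (sc t) hm0']
      exact Finset.sum_congr rfl fun n _ => sc_pow_apply t n _
    have e2' : cev m (sc t) x y = ∑ n ∈ Finset.range N, t ^ n • m n x y := by
      rw [cev_eq_sum (sc t) hm0]
      exact Finset.sum_congr rfl fun n _ => sc_pow_apply t n _
    have split : ∑ n ∈ Finset.range (N + 1),
          t ^ n • (D (m n x y) + shiftF (fun i => m i x y) n)
        = (∑ n ∈ Finset.range (N + 1), t ^ n • D (m n x y))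
          + ∑ n ∈ Finset.range (N + 1), t ^ n • shiftF (fun i => m i x y) n := by
      rw [← Finset.sum_add_distrib]
      exact Finset.sum_congr rfl fun n _ => smul_add _ _ _
    have p1 : ∑ n ∈ Finset.range (N + 1), t ^ n • D (m n x y)
        = D (cev m (sc t) x y) := by
      rw [e2, map_sum]
      exact Finset.sum_congr rfl fun n _ => (map_smul D _ _).symm
    have p2 : ∑ n ∈ Finset.range (N + 1), t ^ n • shiftF (fun i => m i x y) n
        = t • cev m (sc t) x y := by
      rw [Finset.sum_range_succ']
      simp only [shiftF_succ, shiftF_zero, smul_zero, add_zero]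
      rw [e2', Finset.smul_sum]
      exact Finset.sum_congr rfl fun i _ => by
        rw [smul_smul, pow_succ, mul_comm]
    rw [(hsq t x y).2, e1, split, p1, p2]

lemma coeff_sesq_left {D : Module.End k P}
    (hf : FinSuppFam m) (hsq : ConfSesq D D m) (x y : P) :
    ∀ n, m n (D x) y = -(shiftF (fun i => m i x y) n) := by
  apply cev_coeff (k := k) hf
  · apply ((hf x y).image Nat.succ).subset
    intro n hn
    simp only [Function.mem_support] at hn
    by_contra hc
    simp only [Function.mem_support, Set.mem_image, not_exists, not_and] at hc
    apply hn
    have h2 : shiftF (fun i => m i x y) n = 0 := by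
      cases n with
      | zero => rfl
      | succ i =>
        rw [shiftF_succ]
        by_contra hi
        exact hc i hi rfl
    rw [h2, neg_zero]
  · intro t
    obtain ⟨N, hN⟩ := Finset.exists_nat_subset_range (hf x y).toFinset
    have hm0 : ∀ n, n ∉ Finset.range N → m n x y = 0 := fun n hn =>
      nmem_supp hf x y n fun hmem => hn (hN hmem)
    have hg0 : ∀ n, n ∉ Finset.range (N + 1) →
        t ^ n • (-(shiftF (fun i => m i x y) n)) = 0 := by
      intro n hn
      cases n with
      | zero => simp at hn
      | succ i =>
        have hi : i ∉ Finset.range N := fun hi =>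
          hn (by rw [Finset.mem_range] at hi ⊢; omega)
        rw [shiftF_succ, hm0 i hi, neg_zero, smul_zero]
    have e1 : ∑ᶠ n, t ^ n • (-(shiftF (fun i => m i x y) n))
        = ∑ n ∈ Finset.range (N + 1), t ^ n • (-(shiftF (fun i => m i x y) n)) :=
      finsum_eq_range hg0
    have e2' : cev m (sc t) x y = ∑ n ∈ Finset.range N, t ^ n • m n x y := by
      rw [cev_eq_sum (sc t) hm0]
      exact Finset.sum_congr rfl fun n _ => sc_pow_apply t n _
    have p2 : ∑ n ∈ Finset.range (N + 1), t ^ n • (-(shiftF (fun i => m i x y) n))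
        = (-t) • cev m (sc t) x y := by
      rw [Finset.sum_range_succ']
      simp only [shiftF_succ, shiftF_zero, neg_zero, smul_zero, add_zero]
      rw [e2', Finset.smul_sum]
      refine Finset.sum_congr rfl fun i _ => ?_
      rw [smul_neg, ← neg_smul, smul_smul, show -t * t ^ i = -(t ^ (i + 1)) by ring]
    rw [(hsq t x y).1, e1, p2]

lemma cev_D_right {D T : Module.End k P}
    (hf : FinSuppFam m) (hsq : ConfSesq D D m) (hc : D * T = T * D) (x y : P) :
    cev m T x (D y) = D (cev m T x y) + T (cev m T x y) := by
  obtain ⟨N, hN⟩ := Finset.exists_nat_subset_range (hf x y).toFinset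
  have hmono : Finset.range N ⊆ Finset.range (N + 1) :=
    Finset.range_subset_range.mpr (Nat.le_succ N)
  have hm0 : ∀ n, n ∉ Finset.range N → m n x y = 0 := fun n hn =>
    nmem_supp hf x y n fun hmem => hn (hN hmem)
  have hm0' : ∀ n, n ∉ Finset.range (N + 1) → m n x y = 0 := fun n hn =>
    hm0 n fun h => hn (hmono h)
  have hDy : ∀ n, n ∉ Finset.range (N + 1) → m n x (D y) = 0 := by
    intro n hn
    rw [coeff_sesq_right hf hsq x y n]
    cases n with
    | zero => simp at hn
    | succ i =>
      have hi : i ∉ Finset.range N := fun hi =>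
        hn (by rw [Finset.mem_range] at hi ⊢; omega)
      rw [hm0' _ hn, shiftF_succ, hm0 i hi, map_zero, add_zero]
  have ecev : cev m T x y = ∑ n ∈ Finset.range (N + 1), (T ^ n) (m n x y) :=
    cev_eq_sum T hm0'
  have ecevN : cev m T x y = ∑ n ∈ Finset.range N, (T ^ n) (m n x y) :=
    cev_eq_sum T hm0
  rw [cev_eq_sum T hDy]
  have hsplit : ∀ n ∈ Finset.range (N + 1), (T ^ n) (m n x (D y))
      = (T ^ n) (D (m n x y)) + (T ^ n) (shiftF (fun i => m i x y) n) := by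
    intro n _
    rw [coeff_sesq_right hf hsq x y n, map_add]
  rw [Finset.sum_congr rfl hsplit, Finset.sum_add_distrib]
  congr 1
  · rw [ecev, map_sum]
    refine Finset.sum_congr rfl fun n _ => ?_
    have hcomm : D * T ^ n = T ^ n * D := Commute.pow_right hc n
    calc (T ^ n) (D (m n x y)) = (T ^ n * D) (m n x y) := rfl
      _ = (D * T ^ n) (m n x y) := by rw [hcomm]
      _ = D ((T ^ n) (m n x y)) := rfl
  · rw [Finset.sum_range_succ']
    simp only [shiftF_succ, shiftF_zero, map_zero, add_zero]
    rw [ecevN, map_sum]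
    refine Finset.sum_congr rfl fun i _ => ?_
    rw [pow_succ']
    rfl

lemma cev_D_left {D T : Module.End k P}
    (hf : FinSuppFam m) (hsq : ConfSesq D D m) (x y : P) :
    cev m T (D x) y = -(T (cev m T x y)) := by
  obtain ⟨N, hN⟩ := Finset.exists_nat_subset_range (hf x y).toFinset
  have hm0 : ∀ n, n ∉ Finset.range N → m n x y = 0 := fun n hn =>
    nmem_supp hf x y n fun hmem => hn (hN hmem)
  have hDx : ∀ n, n ∉ Finset.range (N + 1) → m n (D x) y = 0 := by
    intro n hn
    rw [coeff_sesq_left hf hsq x y n]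
    cases n with
    | zero => simp at hn
    | succ i =>
      have hi : i ∉ Finset.range N := fun hi =>
        hn (by rw [Finset.mem_range] at hi ⊢; omega)
      rw [shiftF_succ, hm0 i hi, neg_zero]
  have ecevN : cev m T x y = ∑ n ∈ Finset.range N, (T ^ n) (m n x y) :=
    cev_eq_sum T hm0
  rw [cev_eq_sum T hDx]
  have hsplit : ∀ n ∈ Finset.range (N + 1), (T ^ n) (m n (D x) y)
      = -((T ^ n) (shiftF (fun i => m i x y) n)) := by
    intro n _
    rw [coeff_sesq_left hf hsq x y n, map_neg]
  rw [Finset.sum_congr rfl hsplit, Finset.sum_neg_distrib]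
  congr 1
  rw [Finset.sum_range_succ']
  simp only [shiftF_succ, shiftF_zero, map_zero, add_zero]
  rw [ecevN, map_sum]
  refine Finset.sum_congr rfl fun i _ => ?_
  rw [pow_succ']
  rfl

end SesqLemmas

end AuxGen
section Pspec
variable {k A : Type*} [Field k] [AddCommGroup A] [Module k A]

lemma emb_def (a : A) : emb k A a = Finsupp.single 0 a := rfl

@[simp] lemma sc_apply {P : Type*} [AddCommGroup P] [Module k P] (t : k) (v : P) :
    (sc t) v = t • v := rfl

lemma sc_comm {P : Type*} [AddCommGroup P] [Module k P] (E : Module.End k P) (t : k) :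
    sc t * E = E * sc t := by
  simp only [sc]
  rw [smul_mul_assoc, mul_smul_comm, one_mul, mul_one]

@[simp] lemma shft_single (n : ℕ) (a : A) :
    shft k A (Finsupp.single n a) = Finsupp.single (n + 1) a := by
  simp [shft, Finsupp.mapDomain_single]

lemma genInduction (Q : (ℕ →₀ A) → Prop) (h0 : Q 0)
    (hgen : ∀ a : A, Q (emb k A a)) (hD : ∀ x, Q x → Q (shft k A x))
    (hadd : ∀ x y, Q x → Q y → Q (x + y)) : ∀ x, Q x := by
  have hsingle : ∀ (n : ℕ) (b : A), Q (Finsupp.single n b) := by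
    intro n
    induction n with
    | zero => exact fun b => hgen b
    | succ i ih =>
      intro b
      have := hD _ (ih b)
      rwa [shft_single] at this
  intro x
  induction x using Finsupp.induction with
  | zero => exact h0
  | single_add n b f _ _ ih => exact hadd _ _ (hsingle n b) ih

lemma sep3 {x0 x1 x2 y0 y1 y2 : A}
    (h : Finsupp.single 0 x0 + Finsupp.single 1 x1 + Finsupp.single 2 x2
       = Finsupp.single 0 y0 + Finsupp.single 1 y1 + Finsupp.single 2 y2) :
    x0 = y0 ∧ x1 = y1 ∧ x2 = y2 := by
  refine ⟨?_, ?_, ?_⟩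
  · simpa using DFunLike.congr_fun h 0
  · simpa using DFunLike.congr_fun h 1
  · simpa using DFunLike.congr_fun h 2

lemma sep3' {x0 x1 x2 : A}
    (h : Finsupp.single 0 x0 + Finsupp.single 1 x1 + Finsupp.single 2 x2 = 0) :
    x0 = 0 ∧ x1 = 0 ∧ x2 = 0 := by
  have : Finsupp.single 0 x0 + Finsupp.single 1 x1 + Finsupp.single 2 x2
      = Finsupp.single 0 (0 : A) + Finsupp.single 1 (0 : A) + Finsupp.single 2 (0 : A) := by
    simpa using h
  exact sep3 this

end Pspec
section Main
variable {k A : Type*} [Field k] [CharZero k] [AddCommGroup A] [Module k A]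
variable {circA mulA brA starA : A →ₗ[k] A →ₗ[k] A}
variable {br mul : ℕ → (ℕ →₀ A) → (ℕ →₀ A) → (ℕ →₀ A)}

lemma br_cev_T (hbrFs : FinSuppFam br)
    (hbrGen : ∀ (lam : k) (a b : A), cev br (sc lam) (emb k A a) (emb k A b)
      = shft k A (emb k A (circA b a)) + lam • emb k A (starA b a) + emb k A (brA a b))
    (T : Module.End k (ℕ →₀ A)) (a b : A) :
    cev br T (emb k A a) (emb k A b)
      = Finsupp.single 1 (circA b a) + Finsupp.single 0 (brA a b)
        + T (Finsupp.single 0 (starA b a)) := by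
  set g : ℕ → (ℕ →₀ A) := fun n =>
    if n = 0 then Finsupp.single 1 (circA b a) + Finsupp.single 0 (brA a b)
    else if n = 1 then Finsupp.single 0 (starA b a) else 0 with hg
  have hgsupp : ∀ n, n ∉ Finset.range 2 → g n = 0 := by
    intro n hn
    rw [Finset.mem_range] at hn
    have h0 : n ≠ 0 := by omega
    have h1 : n ≠ 1 := by omega
    simp [hg, h0, h1]
  have hcoeff : ∀ n, br n (emb k A a) (emb k A b) = g n := by
    apply cev_coeff (k := k) hbrFs
    · apply Set.Finite.subset (Finset.range 2).finite_toSet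
      intro n hn
      simp only [Function.mem_support] at hn
      by_contra hc
      exact hn (hgsupp n (by simpa using hc))
    · intro t
      have e1 : ∑ᶠ n, t ^ n • g n = ∑ n ∈ Finset.range 2, t ^ n • g n :=
        finsum_eq_range (fun n hn => by rw [hgsupp n hn, smul_zero])
      rw [e1, hbrGen t a b]
      show _ = ∑ n ∈ Finset.range 2, t ^ n • g n
      rw [Finset.sum_range_succ, Finset.sum_range_succ, Finset.sum_range_zero]
      simp only [hg, if_pos rfl, pow_zero, pow_one, one_smul, zero_add,
        Nat.one_ne_zero, if_neg, if_true, reduceIte]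
      rw [emb_def, emb_def, emb_def]
      simp only [shft_single]
      abel
  have hout : ∀ n, n ∉ Finset.range 2 → br n (emb k A a) (emb k A b) = 0 := by
    intro n hn
    rw [hcoeff n, hgsupp n hn]
  rw [cev_eq_sum T hout, Finset.sum_range_succ, Finset.sum_range_succ,
    Finset.sum_range_zero]
  rw [hcoeff 0, hcoeff 1]
  simp only [hg, if_pos rfl, Nat.one_ne_zero, if_neg, reduceIte, pow_zero, pow_one,
    zero_add, Module.End.one_apply]

lemma mul_cev_T (hmulFs : FinSuppFam mul)
    (hmulGen : ∀ (lam : k) (a b : A), cev mul (sc lam) (emb k A a) (emb k A b)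
      = emb k A (mulA a b))
    (T : Module.End k (ℕ →₀ A)) (a b : A) :
    cev mul T (emb k A a) (emb k A b) = Finsupp.single 0 (mulA a b) := by
  set g : ℕ → (ℕ →₀ A) := fun n =>
    if n = 0 then Finsupp.single 0 (mulA a b) else 0 with hg
  have hgsupp : ∀ n, n ∉ Finset.range 1 → g n = 0 := by
    intro n hn
    rw [Finset.mem_range] at hn
    have h0 : n ≠ 0 := by omega
    simp [hg, h0]
  have hcoeff : ∀ n, mul n (emb k A a) (emb k A b) = g n := by
    apply cev_coeff (k := k) hmulFs
    · apply Set.Finite.subset (Finset.range 1).finite_toSet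
      intro n hn
      simp only [Function.mem_support] at hn
      by_contra hc
      exact hn (hgsupp n (by simpa using hc))
    · intro t
      have e1 : ∑ᶠ n, t ^ n • g n = ∑ n ∈ Finset.range 1, t ^ n • g n :=
        finsum_eq_range (fun n hn => by rw [hgsupp n hn, smul_zero])
      rw [e1, hmulGen t a b]
      rw [Finset.sum_range_succ, Finset.sum_range_zero]
      simp [hg, emb_def]
  have hout : ∀ n, n ∉ Finset.range 1 → mul n (emb k A a) (emb k A b) = 0 := by
    intro n hn
    rw [hcoeff n, hgsupp n hn]
  rw [cev_eq_sum T hout, Finset.sum_range_succ, Finset.sum_range_zero]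
  rw [hcoeff 0]
  simp [hg]

end Main
section Main2
variable {k A : Type*} [Field k] [CharZero k] [AddCommGroup A] [Module k A]
variable {circA mulA brA starA : A →ₗ[k] A →ₗ[k] A}
variable {br mul : ℕ → (ℕ →₀ A) → (ℕ →₀ A) → (ℕ →₀ A)}

lemma Dcomm (lam : k) :
    shft k A * (-(sc lam) - shft k A) = (-(sc lam) - shft k A) * shft k A := by
  apply LinearMap.ext
  intro v
  simp only [Module.End.mul_apply, LinearMap.sub_apply, LinearMap.neg_apply, sc_apply,
    map_sub, map_neg, map_smul]

lemma Tapp (lam : k) (v : ℕ →₀ A) :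
    ((-(sc lam) - shft k A) : Module.End k (ℕ →₀ A)) v = -(lam • v) - shft k A v := by
  simp only [LinearMap.sub_apply, LinearMap.neg_apply, sc_apply]

lemma skew_bwd (hbrBil : BilinMap k br) (hbrFs : FinSuppFam br)
    (hbrSesq : ConfSesq (shft k A) (shft k A) br)
    (hbrGen : ∀ (lam : k) (a b : A), cev br (sc lam) (emb k A a) (emb k A b)
      = shft k A (emb k A (circA b a)) + lam • emb k A (starA b a) + emb k A (brA a b))
    (hskew : ∀ a b : A, brA a b = - brA b a)
    (hstar : ∀ a b : A, starA a b = circA a b + circA b a) :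
    ∀ (lam : k) (x y : ℕ →₀ A),
      cev br (sc lam) x y = - cev br (-(sc lam) - shft k A) y x := by
  intro lam
  have hcT : shft k A * (-(sc lam) - shft k A)
      = (-(sc lam) - shft k A) * shft k A := Dcomm lam
  have base : ∀ a b : A, cev br (sc lam) (emb k A a) (emb k A b)
      = - cev br (-(sc lam) - shft k A) (emb k A b) (emb k A a) := by
    intro a b
    rw [br_cev_T hbrFs hbrGen, br_cev_T hbrFs hbrGen, Tapp, sc_apply]
    rw [hstar a b, hstar b a, hskew b a]
    simp only [map_add, Finsupp.single_add, shft_single, smul_add, Finsupp.single_neg]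
    module
  have ext2 : ∀ (a : A) (y : ℕ →₀ A),
      cev br (sc lam) (emb k A a) y
        = - cev br (-(sc lam) - shft k A) y (emb k A a) := by
    intro a
    apply genInduction (k := k)
    · rw [cev_zero_right hbrBil hbrFs, cev_zero_left hbrBil hbrFs, neg_zero]
    · exact fun b => base a b
    · intro y hy
      have h' : cev br (-(sc lam) - shft k A) y (emb k A a)
          = - cev br (sc lam) (emb k A a) y := by rw [hy, neg_neg]
      rw [(hbrSesq lam (emb k A a) y).2, cev_D_left hbrFs hbrSesq, h']
      simp only [map_neg, map_add, map_smul, neg_neg, Tapp, sc_apply, smul_neg,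
        neg_smul, neg_sub, sub_neg_eq_add, neg_add]
      all_goals module
    · intro y z hy hz
      rw [cev_add_right hbrBil hbrFs, cev_add_left hbrBil hbrFs, hy, hz, neg_add]
  refine genInduction
    (fun x => ∀ y, cev br (sc lam) x y = - cev br (-(sc lam) - shft k A) y x)
    ?_ ext2 ?_ ?_
  · intro y
    rw [cev_zero_left hbrBil hbrFs, cev_zero_right hbrBil hbrFs, neg_zero]
  · intro x hx y
    have h' : cev br (-(sc lam) - shft k A) y x = - cev br (sc lam) x y := by
      rw [hx y, neg_neg]
    rw [(hbrSesq lam x y).1, cev_D_right hbrFs hbrSesq hcT, h']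
    simp only [map_neg, map_add, map_smul, neg_neg, Tapp, sc_apply, smul_neg,
      neg_smul, neg_sub, sub_neg_eq_add, neg_add]
    all_goals module
  · intro x x' hx hx' y
    rw [cev_add_left hbrBil hbrFs, cev_add_right hbrBil hbrFs, hx y, hx' y, neg_add]

lemma comm_bwd (hmulBil : BilinMap k mul) (hmulFs : FinSuppFam mul)
    (hmulSesq : ConfSesq (shft k A) (shft k A) mul)
    (hmulGen : ∀ (lam : k) (a b : A), cev mul (sc lam) (emb k A a) (emb k A b)
      = emb k A (mulA a b))
    (hcomm : ∀ a b : A, mulA a b = mulA b a) :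
    ∀ (lam : k) (x y : ℕ →₀ A),
      cev mul (sc lam) x y = cev mul (-(sc lam) - shft k A) y x := by
  intro lam
  have hcT : shft k A * (-(sc lam) - shft k A)
      = (-(sc lam) - shft k A) * shft k A := Dcomm lam
  have base : ∀ a b : A, cev mul (sc lam) (emb k A a) (emb k A b)
      = cev mul (-(sc lam) - shft k A) (emb k A b) (emb k A a) := by
    intro a b
    rw [mul_cev_T hmulFs hmulGen, mul_cev_T hmulFs hmulGen, hcomm a b]
  have ext2 : ∀ (a : A) (y : ℕ →₀ A),
      cev mul (sc lam) (emb k A a) y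
        = cev mul (-(sc lam) - shft k A) y (emb k A a) := by
    intro a
    apply genInduction (k := k)
    · rw [cev_zero_right hmulBil hmulFs, cev_zero_left hmulBil hmulFs]
    · exact fun b => base a b
    · intro y hy
      rw [(hmulSesq lam (emb k A a) y).2, cev_D_left hmulFs hmulSesq, ← hy]
      simp only [map_neg, map_add, map_smul, neg_neg, Tapp, sc_apply, smul_neg,
        neg_smul, neg_sub, sub_neg_eq_add, neg_add]
      all_goals module
    · intro y z hy hz
      rw [cev_add_right hmulBil hmulFs, cev_add_left hmulBil hmulFs, hy, hz]
  refine genInduction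
    (fun x => ∀ y, cev mul (sc lam) x y = cev mul (-(sc lam) - shft k A) y x)
    ?_ ext2 ?_ ?_
  · intro y
    rw [cev_zero_left hmulBil hmulFs, cev_zero_right hmulBil hmulFs]
  · intro x hx y
    rw [(hmulSesq lam x y).1, cev_D_right hmulFs hmulSesq hcT, ← hx y]
    simp only [map_neg, map_add, map_smul, neg_neg, Tapp, sc_apply, smul_neg,
      neg_smul, neg_sub, sub_neg_eq_add, neg_add]
    all_goals module
  · intro x x' hx hx' y
    rw [cev_add_left hmulBil hmulFs, cev_add_right hmulBil hmulFs, hx y, hx' y]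

end Main2
section Main3
variable {k A : Type*} [Field k] [CharZero k] [AddCommGroup A] [Module k A]
variable {circA mulA brA starA : A →ₗ[k] A →ₗ[k] A}
variable {br mul : ℕ → (ℕ →₀ A) → (ℕ →₀ A) → (ℕ →₀ A)}

lemma jac_lhs (hbrBil : BilinMap k br) (hbrFs : FinSuppFam br)
    (hbrSesq : ConfSesq (shft k A) (shft k A) br)
    (hbrGen : ∀ (lam : k) (a b : A), cev br (sc lam) (emb k A a) (emb k A b)
      = shft k A (emb k A (circA b a)) + lam • emb k A (starA b a) + emb k A (brA a b))
    (lam mu : k) (a b c : A) :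
    cev br (sc lam) (emb k A a) (cev br (sc mu) (emb k A b) (emb k A c))
    = Finsupp.single 2 (circA (circA c b) a)
      + Finsupp.single 1 (lam • (starA (circA c b) a + circA (circA c b) a)
          + mu • circA (starA c b) a + (brA a (circA c b) + circA (brA b c) a))
      + Finsupp.single 0 (lam ^ 2 • starA (circA c b) a
          + lam • (brA a (circA c b) + starA (brA b c) a)
          + (lam * mu) • starA (starA c b) a + mu • brA a (starA c b)
          + brA a (brA b c)) := by
  rw [hbrGen mu b c]
  rw [cev_add_right hbrBil hbrFs, cev_add_right hbrBil hbrFs,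
    cev_smul_right hbrBil hbrFs]
  rw [(hbrSesq lam (emb k A a) (emb k A (circA c b))).2]
  rw [hbrGen lam a (circA c b), hbrGen lam a (starA c b), hbrGen lam a (brA b c)]
  simp only [emb_def, map_add, map_smul, shft_single, smul_add, smul_sub, smul_neg,
    Finsupp.single_add, Finsupp.single_neg, Finsupp.single_sub, Finsupp.single_zero,
    ← Finsupp.smul_single, Nat.reduceAdd]
  module

lemma jac_rhs1 (hbrBil : BilinMap k br) (hbrFs : FinSuppFam br)
    (hbrSesq : ConfSesq (shft k A) (shft k A) br)
    (hbrGen : ∀ (lam : k) (a b : A), cev br (sc lam) (emb k A a) (emb k A b)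
      = shft k A (emb k A (circA b a)) + lam • emb k A (starA b a) + emb k A (brA a b))
    (lam mu : k) (a b c : A) :
    cev br (sc (lam + mu)) (cev br (sc lam) (emb k A a) (emb k A b)) (emb k A c)
    = Finsupp.single 2 (0 : A)
      + Finsupp.single 1 (lam • (circA c (starA b a) - circA c (circA b a))
          + mu • (- circA c (circA b a)) + circA c (brA a b))
      + Finsupp.single 0 (lam ^ 2 • (starA c (starA b a) - starA c (circA b a))
          + lam • (brA (starA b a) c - brA (circA b a) c + starA c (brA a b))
          + (lam * mu) • (starA c (starA b a) - (2 : k) • starA c (circA b a))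
          + mu ^ 2 • (- starA c (circA b a))
          + mu • (starA c (brA a b) - brA (circA b a) c)
          + brA (brA a b) c) := by
  rw [hbrGen lam a b]
  rw [cev_add_left hbrBil hbrFs, cev_add_left hbrBil hbrFs,
    cev_smul_left hbrBil hbrFs]
  rw [(hbrSesq (lam + mu) (emb k A (circA b a)) (emb k A c)).1]
  rw [hbrGen (lam + mu) (circA b a) c, hbrGen (lam + mu) (starA b a) c,
    hbrGen (lam + mu) (brA a b) c]
  simp only [emb_def, map_add, map_smul, shft_single, smul_add, smul_sub, smul_neg,
    Finsupp.single_add, Finsupp.single_neg, Finsupp.single_sub, Finsupp.single_zero,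
    ← Finsupp.smul_single, Nat.reduceAdd]
  module

lemma leib_lhs (hbrFs : FinSuppFam br)
    (hbrGen : ∀ (lam : k) (a b : A), cev br (sc lam) (emb k A a) (emb k A b)
      = shft k A (emb k A (circA b a)) + lam • emb k A (starA b a) + emb k A (brA a b))
    (hmulGen : ∀ (lam : k) (a b : A), cev mul (sc lam) (emb k A a) (emb k A b)
      = emb k A (mulA a b))
    (lam mu : k) (a b c : A) :
    cev br (sc lam) (emb k A a) (cev mul (sc mu) (emb k A b) (emb k A c))
    = Finsupp.single 1 (circA (mulA b c) a)
      + Finsupp.single 0 (lam • starA (mulA b c) a + brA a (mulA b c)) := by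
  rw [hmulGen mu b c, hbrGen lam a (mulA b c)]
  simp only [emb_def, map_add, map_smul, shft_single, smul_add, smul_sub, smul_neg,
    Finsupp.single_add, Finsupp.single_neg, Finsupp.single_sub, Finsupp.single_zero,
    ← Finsupp.smul_single, Nat.reduceAdd]
  module

lemma leib_rhs1 (hmulBil : BilinMap k mul) (hmulFs : FinSuppFam mul)
    (hmulSesq : ConfSesq (shft k A) (shft k A) mul)
    (hbrGen : ∀ (lam : k) (a b : A), cev br (sc lam) (emb k A a) (emb k A b)
      = shft k A (emb k A (circA b a)) + lam • emb k A (starA b a) + emb k A (brA a b))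
    (hmulGen : ∀ (lam : k) (a b : A), cev mul (sc lam) (emb k A a) (emb k A b)
      = emb k A (mulA a b))
    (lam mu : k) (a b c : A) :
    cev mul (sc (lam + mu)) (cev br (sc lam) (emb k A a) (emb k A b)) (emb k A c)
    = Finsupp.single 0 (lam • (mulA (starA b a) c - mulA (circA b a) c)
        + mu • (- mulA (circA b a) c) + mulA (brA a b) c) := by
  rw [hbrGen lam a b]
  rw [cev_add_left hmulBil hmulFs, cev_add_left hmulBil hmulFs,
    cev_smul_left hmulBil hmulFs]
  rw [(hmulSesq (lam + mu) (emb k A (circA b a)) (emb k A c)).1]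
  rw [hmulGen (lam + mu) (circA b a) c, hmulGen (lam + mu) (starA b a) c,
    hmulGen (lam + mu) (brA a b) c]
  simp only [emb_def, map_add, map_smul, shft_single, smul_add, smul_sub, smul_neg,
    Finsupp.single_add, Finsupp.single_neg, Finsupp.single_sub, Finsupp.single_zero,
    ← Finsupp.smul_single, Nat.reduceAdd]
  module

lemma leib_rhs2 (hmulBil : BilinMap k mul) (hmulFs : FinSuppFam mul)
    (hmulSesq : ConfSesq (shft k A) (shft k A) mul)
    (hbrGen : ∀ (lam : k) (a b : A), cev br (sc lam) (emb k A a) (emb k A b)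
      = shft k A (emb k A (circA b a)) + lam • emb k A (starA b a) + emb k A (brA a b))
    (hmulGen : ∀ (lam : k) (a b : A), cev mul (sc lam) (emb k A a) (emb k A b)
      = emb k A (mulA a b))
    (lam mu : k) (a b c : A) :
    cev mul (sc mu) (emb k A b) (cev br (sc lam) (emb k A a) (emb k A c))
    = Finsupp.single 1 (mulA b (circA c a))
      + Finsupp.single 0 (mu • mulA b (circA c a) + lam • mulA b (starA c a)
          + mulA b (brA a c)) := by
  rw [hbrGen lam a c]
  rw [cev_add_right hmulBil hmulFs, cev_add_right hmulBil hmulFs,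
    cev_smul_right hmulBil hmulFs]
  rw [(hmulSesq mu (emb k A b) (emb k A (circA c a))).2]
  rw [hmulGen mu b (circA c a), hmulGen mu b (starA c a), hmulGen mu b (brA a c)]
  simp only [emb_def, map_add, map_smul, shft_single, smul_add, smul_sub, smul_neg,
    Finsupp.single_add, Finsupp.single_neg, Finsupp.single_sub, Finsupp.single_zero,
    ← Finsupp.smul_single, Nat.reduceAdd]
  module

end Main3
section Main4
variable {k A : Type*} [Field k] [CharZero k] [AddCommGroup A] [Module k A]
variable {circA mulA brA starA : A →ₗ[k] A →ₗ[k] A}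
variable {br mul : ℕ → (ℕ →₀ A) → (ℕ →₀ A) → (ℕ →₀ A)}

lemma jac_bwd (hbrBil : BilinMap k br) (hbrFs : FinSuppFam br)
    (hbrSesq : ConfSesq (shft k A) (shft k A) br)
    (hbrGen : ∀ (lam : k) (a b : A), cev br (sc lam) (emb k A a) (emb k A b)
      = shft k A (emb k A (circA b a)) + lam • emb k A (starA b a) + emb k A (brA a b))
    (hN1 : ∀ x y z : A, circA (circA x y) z - circA x (circA y z)
        = circA (circA y x) z - circA y (circA x z))
    (hN2 : ∀ x y z : A, circA (circA x y) z = circA (circA x z) y)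
    (hGD : ∀ x y z : A, brA (circA x y) z - brA (circA x z) y + circA (brA x y) z
        - circA (brA x z) y - circA x (brA y z) = 0)
    (hsk : ∀ x y : A, brA x y = - brA y x)
    (hjc : ∀ x y z : A, brA (brA x y) z + brA (brA y z) x + brA (brA z x) y = 0)
    (hstar : ∀ x y : A, starA x y = circA x y + circA y x) :
    ∀ (lam mu : k) (x y z : ℕ →₀ A),
      cev br (sc lam) x (cev br (sc mu) y z)
        = cev br (sc (lam + mu)) (cev br (sc lam) x y) z
          + cev br (sc mu) y (cev br (sc lam) x z) := by
  intro lam mu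
  have hskoL : ∀ x y z : A, circA (brA x y) z = - circA (brA y x) z := by
    intro x y z; rw [hsk x y, map_neg, LinearMap.neg_apply]
  have hskBL : ∀ x y z : A, brA (brA x y) z = - brA (brA y x) z := by
    intro x y z; rw [hsk x y, map_neg, LinearMap.neg_apply]
  have base : ∀ a b c : A,
      cev br (sc lam) (emb k A a) (cev br (sc mu) (emb k A b) (emb k A c))
        = cev br (sc (lam + mu)) (cev br (sc lam) (emb k A a) (emb k A b)) (emb k A c)
          + cev br (sc mu) (emb k A b) (cev br (sc lam) (emb k A a) (emb k A c)) := by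
    intro a b c
    have e2 : starA (circA c b) a + circA (circA c b) a
        = - circA c (circA b a) + circA c (starA b a) + circA (starA c a) b := by
      simp only [hstar, map_add, LinearMap.add_apply]
      linear_combination (norm := module) (-1 : k) • hN1 a c b - (2 : k) • hN2 c a b
    have e3 : circA (starA c b) a
        = - circA c (circA b a) + (starA (circA c a) b + circA (circA c a) b) := by
      simp only [hstar, map_add, LinearMap.add_apply]
      linear_combination (norm := module) hN1 b c a - (2 : k) • hN2 c a b
    have e4 : brA a (circA c b) + circA (brA b c) a
        = circA c (brA a b) + (brA b (circA c a) + circA (brA a c) b) := by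
      linear_combination (norm := module) hGD c a b - hskoL a c b
        + hsk a (circA c b) + hskoL b c a - hsk b (circA c a)
    have e5 : starA (circA c b) a
        = - starA c (circA b a) + starA c (starA b a) := by
      simp only [hstar, map_add, LinearMap.add_apply]
      linear_combination (norm := module) (-1 : k) • hN2 a b c - hN1 a c b
        - hN2 c a b
    have e6 : (0 : A) = - starA c (circA b a) + starA (circA c a) b := by
      simp only [hstar, map_add, LinearMap.add_apply]
      linear_combination (norm := module) hN2 b a c + hN1 b c a - hN2 c a b
    have e7 : starA (starA c b) a
        = starA c (starA b a) - (2 : k) • starA c (circA b a)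
          + starA (starA c a) b := by
      simp only [hstar, map_add, LinearMap.add_apply]
      linear_combination (norm := module) (-1 : k) • hN1 a b c - hN1 a c b
        + hN1 b c a - (2 : k) • hN2 c a b
    have e8 : brA a (circA c b) + starA (brA b c) a
        = brA (starA b a) c - brA (circA b a) c + starA c (brA a b)
          + brA b (starA c a) := by
      simp only [hstar, map_add, LinearMap.add_apply]
      linear_combination (norm := module) (-1 : k) • hGD a b c + hGD c a b
        - hskoL a c b + hsk a (circA c b) + hskoL b c a - hsk b (circA a c)
        - hsk b (circA c a)
    have e9 : brA a (starA c b)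
        = - brA (circA b a) c + starA c (brA a b)
          + (brA b (circA c a) + starA (brA a c) b) := by
      simp only [hstar, map_add, LinearMap.add_apply]
      linear_combination (norm := module) hGD b a c + hGD c a b - hskoL a b c
        - hskoL a c b + hsk a (circA b c) + hsk a (circA c b) + hskoL b c a
        - hsk b (circA c a)
    have e10 : brA a (brA b c) = brA (brA a b) c + brA b (brA a c) := by
      linear_combination (norm := module) (-1 : k) • hjc a b c + hskBL a c b
        + hsk a (brA b c) - hsk b (brA a c)
    have hc2 : circA (circA c b) a = 0 + circA (circA c a) b := by
      linear_combination (norm := module) hN2 c b a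
    have hc1 : lam • (starA (circA c b) a + circA (circA c b) a)
          + mu • circA (starA c b) a + (brA a (circA c b) + circA (brA b c) a)
        = (lam • (circA c (starA b a) - circA c (circA b a))
            + mu • (- circA c (circA b a)) + circA c (brA a b))
          + (mu • (starA (circA c a) b + circA (circA c a) b)
            + lam • circA (starA c a) b + (brA b (circA c a) + circA (brA a c) b)) := by
      linear_combination (norm := module) lam • e2 + mu • e3 + e4
    have hc0 : lam ^ 2 • starA (circA c b) a
          + lam • (brA a (circA c b) + starA (brA b c) a)
          + (lam * mu) • starA (starA c b) a + mu • brA a (starA c b)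
          + brA a (brA b c)
        = (lam ^ 2 • (starA c (starA b a) - starA c (circA b a))
            + lam • (brA (starA b a) c - brA (circA b a) c + starA c (brA a b))
            + (lam * mu) • (starA c (starA b a) - (2 : k) • starA c (circA b a))
            + mu ^ 2 • (- starA c (circA b a))
            + mu • (starA c (brA a b) - brA (circA b a) c)
            + brA (brA a b) c)
          + (mu ^ 2 • starA (circA c a) b
            + mu • (brA b (circA c a) + starA (brA a c) b)
            + (mu * lam) • starA (starA c a) b + lam • brA b (starA c a)
            + brA b (brA a c)) := by
      linear_combination (norm := module) (lam ^ 2) • e5 + (mu ^ 2) • e6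
        + (lam * mu) • e7 + lam • e8 + mu • e9 + e10
    rw [jac_lhs hbrBil hbrFs hbrSesq hbrGen lam mu a b c,
      jac_rhs1 hbrBil hbrFs hbrSesq hbrGen lam mu a b c,
      jac_lhs hbrBil hbrFs hbrSesq hbrGen mu lam b a c,
      congrArg (Finsupp.single 2) hc2, congrArg (Finsupp.single 1) hc1,
      congrArg (Finsupp.single 0) hc0]
    simp only [Finsupp.single_add, Finsupp.single_zero]
    all_goals abel
  -- stage 1: z arbitrary
  have st1 : ∀ (a b : A) (z : ℕ →₀ A),
      cev br (sc lam) (emb k A a) (cev br (sc mu) (emb k A b) z)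
        = cev br (sc (lam + mu))
            (cev br (sc lam) (emb k A a) (emb k A b)) z
          + cev br (sc mu) (emb k A b) (cev br (sc lam) (emb k A a) z) := by
    intro a b
    apply genInduction (k := k)
    · simp only [cev_zero_right hbrBil hbrFs, add_zero]
    · exact fun c => base a b c
    · intro z ih
      simp only [(hbrSesq mu (emb k A b) z).2, cev_add_right hbrBil hbrFs,
        cev_smul_right hbrBil hbrFs,
        (hbrSesq lam (emb k A a) (cev br (sc mu) (emb k A b) z)).2,
        (hbrSesq (lam + mu) (cev br (sc lam) (emb k A a) (emb k A b)) z).2,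
        (hbrSesq lam (emb k A a) z).2,
        (hbrSesq mu (emb k A b) (cev br (sc lam) (emb k A a) z)).2,
        ih, map_add, map_smul, smul_add]
      all_goals module
    · intro z z' ih ih'
      simp only [cev_add_right hbrBil hbrFs, ih, ih']
      all_goals abel
  -- stage 2: y z arbitrary
  have st2 : ∀ (a : A) (y z : ℕ →₀ A),
      cev br (sc lam) (emb k A a) (cev br (sc mu) y z)
        = cev br (sc (lam + mu)) (cev br (sc lam) (emb k A a) y) z
          + cev br (sc mu) y (cev br (sc lam) (emb k A a) z) := by
    intro a
    refine genInduction (k := k)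
      (fun y => ∀ z, cev br (sc lam) (emb k A a) (cev br (sc mu) y z)
        = cev br (sc (lam + mu)) (cev br (sc lam) (emb k A a) y) z
          + cev br (sc mu) y (cev br (sc lam) (emb k A a) z)) ?_ ?_ ?_ ?_
    · intro z
      simp only [cev_zero_left hbrBil hbrFs, cev_zero_right hbrBil hbrFs, add_zero]
    · exact fun b => st1 a b
    · intro y ih z
      simp only [(hbrSesq mu y z).1, cev_smul_right hbrBil hbrFs,
        (hbrSesq lam (emb k A a) y).2, cev_add_left hbrBil hbrFs,
        cev_smul_left hbrBil hbrFs,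
        (hbrSesq (lam + mu) (cev br (sc lam) (emb k A a) y) z).1,
        (hbrSesq mu y (cev br (sc lam) (emb k A a) z)).1,
        ih, map_add, map_smul, smul_add]
      all_goals module
    · intro y y' ih ih' z
      simp only [cev_add_left hbrBil hbrFs, cev_add_right hbrBil hbrFs, ih, ih']
      all_goals abel
  -- stage 3: all arbitrary
  refine genInduction (k := k)
    (fun x => ∀ y z, cev br (sc lam) x (cev br (sc mu) y z)
      = cev br (sc (lam + mu)) (cev br (sc lam) x y) z
        + cev br (sc mu) y (cev br (sc lam) x z)) ?_ ?_ ?_ ?_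
  · intro y z
    simp only [cev_zero_left hbrBil hbrFs, cev_zero_right hbrBil hbrFs, add_zero]
  · exact fun a => st2 a
  · intro x ih y z
    simp only [(hbrSesq lam x (cev br (sc mu) y z)).1, (hbrSesq lam x y).1,
      (hbrSesq lam x z).1, cev_smul_left hbrBil hbrFs,
      cev_smul_right hbrBil hbrFs, ih, smul_add]
    all_goals module
  · intro x x' ih ih' y z
    simp only [cev_add_left hbrBil hbrFs, cev_add_right hbrBil hbrFs, ih, ih']
    all_goals abel

end Main4
section Main5
variable {k A : Type*} [Field k] [CharZero k] [AddCommGroup A] [Module k A]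
variable {circA mulA brA starA : A →ₗ[k] A →ₗ[k] A}
variable {br mul : ℕ → (ℕ →₀ A) → (ℕ →₀ A) → (ℕ →₀ A)}

lemma assoc_bwd (hmulBil : BilinMap k mul) (hmulFs : FinSuppFam mul)
    (hmulSesq : ConfSesq (shft k A) (shft k A) mul)
    (hmulGen : ∀ (lam : k) (a b : A), cev mul (sc lam) (emb k A a) (emb k A b)
      = emb k A (mulA a b))
    (has : ∀ x y z : A, mulA (mulA x y) z = mulA x (mulA y z)) :
    ∀ (lam mu : k) (x y z : ℕ →₀ A),
      cev mul (sc (lam + mu)) (cev mul (sc lam) x y) z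
        = cev mul (sc lam) x (cev mul (sc mu) y z) := by
  intro lam mu
  have base : ∀ a b c : A,
      cev mul (sc (lam + mu)) (cev mul (sc lam) (emb k A a) (emb k A b)) (emb k A c)
        = cev mul (sc lam) (emb k A a) (cev mul (sc mu) (emb k A b) (emb k A c)) := by
    intro a b c
    rw [hmulGen lam a b, hmulGen mu b c, hmulGen (lam + mu) (mulA a b) c,
      hmulGen lam a (mulA b c), has a b c]
  have st1 : ∀ (a b : A) (z : ℕ →₀ A),
      cev mul (sc (lam + mu)) (cev mul (sc lam) (emb k A a) (emb k A b)) z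
        = cev mul (sc lam) (emb k A a) (cev mul (sc mu) (emb k A b) z) := by
    intro a b
    apply genInduction (k := k)
    · simp only [cev_zero_right hmulBil hmulFs]
    · exact fun c => base a b c
    · intro z ih
      simp only [(hmulSesq (lam + mu) (cev mul (sc lam) (emb k A a) (emb k A b)) z).2,
        (hmulSesq mu (emb k A b) z).2, cev_add_right hmulBil hmulFs,
        cev_smul_right hmulBil hmulFs,
        (hmulSesq lam (emb k A a) (cev mul (sc mu) (emb k A b) z)).2,
        ih, map_add, map_smul, smul_add]
      all_goals module
    · intro z z' ih ih'
      simp only [cev_add_right hmulBil hmulFs, ih, ih']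
  have st2 : ∀ (a : A) (y z : ℕ →₀ A),
      cev mul (sc (lam + mu)) (cev mul (sc lam) (emb k A a) y) z
        = cev mul (sc lam) (emb k A a) (cev mul (sc mu) y z) := by
    intro a
    refine genInduction (k := k)
      (fun y => ∀ z, cev mul (sc (lam + mu)) (cev mul (sc lam) (emb k A a) y) z
        = cev mul (sc lam) (emb k A a) (cev mul (sc mu) y z)) ?_ ?_ ?_ ?_
    · intro z
      simp only [cev_zero_left hmulBil hmulFs, cev_zero_right hmulBil hmulFs]
    · exact fun b => st1 a b
    · intro y ih z
      simp only [(hmulSesq lam (emb k A a) y).2, cev_add_left hmulBil hmulFs,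
        cev_smul_left hmulBil hmulFs,
        (hmulSesq (lam + mu) (cev mul (sc lam) (emb k A a) y) z).1,
        (hmulSesq mu y z).1, cev_smul_right hmulBil hmulFs, ih]
      all_goals module
    · intro y y' ih ih' z
      simp only [cev_add_left hmulBil hmulFs, cev_add_right hmulBil hmulFs, ih, ih']
  refine genInduction (k := k)
    (fun x => ∀ y z, cev mul (sc (lam + mu)) (cev mul (sc lam) x y) z
      = cev mul (sc lam) x (cev mul (sc mu) y z)) ?_ ?_ ?_ ?_
  · intro y z
    simp only [cev_zero_left hmulBil hmulFs]
  · exact fun a => st2 a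
  · intro x ih y z
    simp only [(hmulSesq lam x y).1, cev_smul_left hmulBil hmulFs,
      (hmulSesq lam x (cev mul (sc mu) y z)).1, ih]
  · intro x x' ih ih' y z
    simp only [cev_add_left hmulBil hmulFs, ih, ih']

lemma leib_bwd (hbrBil : BilinMap k br) (hbrFs : FinSuppFam br)
    (hbrSesq : ConfSesq (shft k A) (shft k A) br)
    (hbrGen : ∀ (lam : k) (a b : A), cev br (sc lam) (emb k A a) (emb k A b)
      = shft k A (emb k A (circA b a)) + lam • emb k A (starA b a) + emb k A (brA a b))
    (hmulBil : BilinMap k mul) (hmulFs : FinSuppFam mul)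
    (hmulSesq : ConfSesq (shft k A) (shft k A) mul)
    (hmulGen : ∀ (lam : k) (a b : A), cev mul (sc lam) (emb k A a) (emb k A b)
      = emb k A (mulA a b))
    (hcm : ∀ x y : A, mulA x y = mulA y x)
    (hD1 : ∀ x y z : A, circA (mulA x y) z = mulA x (circA y z))
    (hD2 : ∀ x y z : A, circA x (mulA y z) = mulA (circA x y) z + mulA y (circA x z))
    (hLB : ∀ x y z : A, brA x (mulA y z) = mulA (brA x y) z + mulA y (brA x z))
    (hstar : ∀ x y : A, starA x y = circA x y + circA y x) :
    ∀ (lam mu : k) (x y z : ℕ →₀ A),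
      cev br (sc lam) x (cev mul (sc mu) y z)
        = cev mul (sc (lam + mu)) (cev br (sc lam) x y) z
          + cev mul (sc mu) y (cev br (sc lam) x z) := by
  intro lam mu
  have base : ∀ a b c : A,
      cev br (sc lam) (emb k A a) (cev mul (sc mu) (emb k A b) (emb k A c))
        = cev mul (sc (lam + mu)) (cev br (sc lam) (emb k A a) (emb k A b)) (emb k A c)
          + cev mul (sc mu) (emb k A b) (cev br (sc lam) (emb k A a) (emb k A c)) := by
    intro a b c
    have f2 : starA (mulA b c) a
        = mulA (starA b a) c - mulA (circA b a) c + mulA b (starA c a) := by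
      simp only [hstar, map_add, LinearMap.add_apply]
      linear_combination (norm := module) hD2 a b c + hD1 b c a
    have hcoR : circA b (mulA a c) = circA b (mulA c a) := by rw [hcm a c]
    have hcoL : circA (mulA b c) a = circA (mulA c b) a := by rw [hcm b c]
    have f3 : (0 : A) = - mulA (circA b a) c + mulA b (circA c a) := by
      linear_combination (norm := module) (-1 : k) • hD2 b a c + hD1 b c a
        + hD2 b c a - hD1 c b a + hcoR - hcm a (circA b c) - hcoL
    have hc1 : circA (mulA b c) a = mulA b (circA c a) := hD1 b c a
    have hc0 : lam • starA (mulA b c) a + brA a (mulA b c)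
        = (lam • (mulA (starA b a) c - mulA (circA b a) c)
            + mu • (- mulA (circA b a) c) + mulA (brA a b) c)
          + (mu • mulA b (circA c a) + lam • mulA b (starA c a)
            + mulA b (brA a c)) := by
      linear_combination (norm := module) lam • f2 + mu • f3 + hLB a b c
    rw [leib_lhs hbrFs hbrGen hmulGen lam mu a b c,
      leib_rhs1 hmulBil hmulFs hmulSesq hbrGen hmulGen lam mu a b c,
      leib_rhs2 hmulBil hmulFs hmulSesq hbrGen hmulGen lam mu a b c,
      congrArg (Finsupp.single 1) hc1, congrArg (Finsupp.single 0) hc0]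
    simp only [Finsupp.single_add]
    abel
  have st1 : ∀ (a b : A) (z : ℕ →₀ A),
      cev br (sc lam) (emb k A a) (cev mul (sc mu) (emb k A b) z)
        = cev mul (sc (lam + mu)) (cev br (sc lam) (emb k A a) (emb k A b)) z
          + cev mul (sc mu) (emb k A b) (cev br (sc lam) (emb k A a) z) := by
    intro a b
    apply genInduction (k := k)
    · simp only [cev_zero_right hbrBil hbrFs, cev_zero_right hmulBil hmulFs, add_zero]
    · exact fun c => base a b c
    · intro z ih
      simp only [(hmulSesq mu (emb k A b) z).2, cev_add_right hbrBil hbrFs,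
        cev_smul_right hbrBil hbrFs,
        (hbrSesq lam (emb k A a) (cev mul (sc mu) (emb k A b) z)).2,
        (hmulSesq (lam + mu) (cev br (sc lam) (emb k A a) (emb k A b)) z).2,
        (hbrSesq lam (emb k A a) z).2, cev_add_right hmulBil hmulFs,
        cev_smul_right hmulBil hmulFs,
        (hmulSesq mu (emb k A b) (cev br (sc lam) (emb k A a) z)).2,
        ih, map_add, map_smul, smul_add]
      all_goals module
    · intro z z' ih ih'
      simp only [cev_add_right hbrBil hbrFs, cev_add_right hmulBil hmulFs, ih, ih']
      all_goals abel
  have st2 : ∀ (a : A) (y z : ℕ →₀ A),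
      cev br (sc lam) (emb k A a) (cev mul (sc mu) y z)
        = cev mul (sc (lam + mu)) (cev br (sc lam) (emb k A a) y) z
          + cev mul (sc mu) y (cev br (sc lam) (emb k A a) z) := by
    intro a
    refine genInduction (k := k)
      (fun y => ∀ z, cev br (sc lam) (emb k A a) (cev mul (sc mu) y z)
        = cev mul (sc (lam + mu)) (cev br (sc lam) (emb k A a) y) z
          + cev mul (sc mu) y (cev br (sc lam) (emb k A a) z)) ?_ ?_ ?_ ?_
    · intro z
      simp only [cev_zero_left hmulBil hmulFs, cev_zero_right hbrBil hbrFs,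
        cev_zero_right hmulBil hmulFs, add_zero]
    · exact fun b => st1 a b
    · intro y ih z
      simp only [(hmulSesq mu y z).1, cev_smul_right hbrBil hbrFs,
        (hbrSesq lam (emb k A a) y).2, cev_add_left hmulBil hmulFs,
        cev_smul_left hmulBil hmulFs,
        (hmulSesq (lam + mu) (cev br (sc lam) (emb k A a) y) z).1,
        (hmulSesq mu y (cev br (sc lam) (emb k A a) z)).1,
        ih, smul_add]
      all_goals module
    · intro y y' ih ih' z
      simp only [cev_add_left hmulBil hmulFs, cev_add_right hbrBil hbrFs,
        cev_add_left hbrBil hbrFs, ih, ih']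
      all_goals abel
  refine genInduction (k := k)
    (fun x => ∀ y z, cev br (sc lam) x (cev mul (sc mu) y z)
      = cev mul (sc (lam + mu)) (cev br (sc lam) x y) z
        + cev mul (sc mu) y (cev br (sc lam) x z)) ?_ ?_ ?_ ?_
  · intro y z
    simp only [cev_zero_left hbrBil hbrFs, cev_zero_left hmulBil hmulFs,
      cev_zero_right hmulBil hmulFs, add_zero]
  · exact fun a => st2 a
  · intro x ih y z
    simp only [(hbrSesq lam x (cev mul (sc mu) y z)).1, (hbrSesq lam x y).1,
      (hbrSesq lam x z).1, cev_smul_left hmulBil hmulFs,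
      cev_smul_right hmulBil hmulFs, ih, smul_add]
    all_goals module
  · intro x x' ih ih' y z
    simp only [cev_add_left hbrBil hbrFs, cev_add_left hmulBil hmulFs,
      cev_add_right hmulBil hmulFs, ih, ih']
    all_goals abel

end Main5
section Main6
variable {k A : Type*} [Field k] [CharZero k] [AddCommGroup A] [Module k A]
variable {circA mulA brA starA : A →ₗ[k] A →ₗ[k] A}
variable {br mul : ℕ → (ℕ →₀ A) → (ℕ →₀ A) → (ℕ →₀ A)}

lemma fwd (hbrBil : BilinMap k br) (hmulBil : BilinMap k mul)
    (hbrFs : FinSuppFam br) (hmulFs : FinSuppFam mul)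
    (hbrSesq : ConfSesq (shft k A) (shft k A) br)
    (hmulSesq : ConfSesq (shft k A) (shft k A) mul)
    (hbrGen : ∀ (lam : k) (a b : A), cev br (sc lam) (emb k A a) (emb k A b)
      = shft k A (emb k A (circA b a)) + lam • emb k A (starA b a) + emb k A (brA a b))
    (hmulGen : ∀ (lam : k) (a b : A), cev mul (sc lam) (emb k A a) (emb k A b)
      = emb k A (mulA a b))
    (hconf : IsPoissonConf (shft k A) br mul) :
    IsPGDAlg circA mulA brA ∧ ∀ a b : A, starA a b = circA a b + circA b a := by
  obtain ⟨⟨_, _, _, hskewC, hjacC⟩, ⟨_, _, _, hcommC, hassocC⟩, hleibC⟩ := hconf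
  -- skew-symmetry at generators: star formula and bracket antisymmetry
  have hstar1 : ∀ a b : A,
      (starA a b = circA a b + circA b a) ∧ (brA a b = - brA b a) := by
    intro a b
    have hpoly : ∀ lam : k,
        (Finsupp.single 0 (brA a b) + Finsupp.single 0 (brA b a)
          + Finsupp.single 1 (circA b a) + Finsupp.single 1 (circA a b)
          - Finsupp.single 1 (starA a b))
        + lam • (Finsupp.single 0 (starA b a) - Finsupp.single 0 (starA a b)) = 0 := by
      intro lam
      have h := hskewC lam (emb k A a) (emb k A b)
      rw [br_cev_T hbrFs hbrGen, br_cev_T hbrFs hbrGen, Tapp, sc_apply] at h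
      simp only [shft_single] at h
      linear_combination (norm := module) h
    obtain ⟨h0, h1⟩ := poly1 _ _ hpoly
    have hb' : brA a b + brA b a = 0 := by
      have := DFunLike.congr_fun h0 0
      simpa using this
    have hs' : circA b a + circA a b - starA a b = 0 := by
      have := DFunLike.congr_fun h0 1
      simpa using this
    exact ⟨by linear_combination (norm := module) -hs',
      eq_neg_of_add_eq_zero_left hb'⟩
  have hstarA : ∀ a b : A, starA a b = circA a b + circA b a := fun a b => (hstar1 a b).1
  have hskA : ∀ a b : A, brA a b = - brA b a := fun a b => (hstar1 a b).2
  -- commutativity and associativity of the product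
  have hcm : ∀ a b : A, mulA a b = mulA b a := by
    intro a b
    have h := hcommC 0 (emb k A a) (emb k A b)
    rw [mul_cev_T hmulFs hmulGen, mul_cev_T hmulFs hmulGen] at h
    exact Finsupp.single_injective 0 h
  have has : ∀ a b c : A, mulA (mulA a b) c = mulA a (mulA b c) := by
    intro a b c
    have h := hassocC 0 0 (emb k A a) (emb k A b) (emb k A c)
    rw [hmulGen 0 a b, hmulGen 0 b c, hmulGen (0 + 0) (mulA a b) c,
      hmulGen 0 a (mulA b c)] at h
    rw [emb_def, emb_def] at h
    exact Finsupp.single_injective 0 h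
  -- Jacobi components
  have hcomp : ∀ (lam mu : k) (a b c : A),
      (circA (circA c b) a = 0 + circA (circA c a) b)
      ∧ (lam • (starA (circA c b) a + circA (circA c b) a)
          + mu • circA (starA c b) a + (brA a (circA c b) + circA (brA b c) a)
        = (lam • (circA c (starA b a) - circA c (circA b a))
            + mu • (- circA c (circA b a)) + circA c (brA a b))
          + (mu • (starA (circA c a) b + circA (circA c a) b)
            + lam • circA (starA c a) b + (brA b (circA c a) + circA (brA a c) b)))
      ∧ (lam ^ 2 • starA (circA c b) a
          + lam • (brA a (circA c b) + starA (brA b c) a)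
          + (lam * mu) • starA (starA c b) a + mu • brA a (starA c b)
          + brA a (brA b c)
        = (lam ^ 2 • (starA c (starA b a) - starA c (circA b a))
            + lam • (brA (starA b a) c - brA (circA b a) c + starA c (brA a b))
            + (lam * mu) • (starA c (starA b a) - (2 : k) • starA c (circA b a))
            + mu ^ 2 • (- starA c (circA b a))
            + mu • (starA c (brA a b) - brA (circA b a) c)
            + brA (brA a b) c)
          + (mu ^ 2 • starA (circA c a) b
            + mu • (brA b (circA c a) + starA (brA a c) b)
            + (mu * lam) • starA (starA c a) b + lam • brA b (starA c a)
            + brA b (brA a c))) := by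
    intro lam mu a b c
    have hJ := hjacC lam mu (emb k A a) (emb k A b) (emb k A c)
    rw [jac_lhs hbrBil hbrFs hbrSesq hbrGen lam mu a b c,
      jac_rhs1 hbrBil hbrFs hbrSesq hbrGen lam mu a b c,
      jac_lhs hbrBil hbrFs hbrSesq hbrGen mu lam b a c] at hJ
    refine ⟨?_, ?_, ?_⟩
    · have := DFunLike.congr_fun hJ 2
      simpa using this
    · have := DFunLike.congr_fun hJ 1
      simpa using this
    · have := DFunLike.congr_fun hJ 0
      simpa using this
  have hE1 : ∀ a b c : A, circA (circA c b) a = circA (circA c a) b := by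
    intro a b c
    have h := (hcomp 0 0 a b c).1
    rwa [zero_add] at h
  have key1 : ∀ a b c : A,
      (brA a (circA c b) + circA (brA b c) a - circA c (brA a b)
        - brA b (circA c a) - circA (brA a c) b = 0)
      ∧ (starA (circA c b) a + circA (circA c b) a - circA c (starA b a)
        + circA c (circA b a) - circA (starA c a) b = 0)
      ∧ (circA (starA c b) a + circA c (circA b a) - starA (circA c a) b
        - circA (circA c a) b = 0) := by
    intro a b c
    have h := poly22 (k := k)
      (brA a (circA c b) + circA (brA b c) a - circA c (brA a b)
        - brA b (circA c a) - circA (brA a c) b)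
      (starA (circA c b) a + circA (circA c b) a - circA c (starA b a)
        + circA c (circA b a) - circA (starA c a) b)
      0
      (circA (starA c b) a + circA c (circA b a) - starA (circA c a) b
        - circA (circA c a) b)
      0 0
      (fun lam mu => by
        linear_combination (norm := module) (hcomp lam mu a b c).2.1)
    exact ⟨h.1, h.2.1, h.2.2.2.1⟩
  have key0 : ∀ a b c : A,
      (brA a (brA b c) - brA (brA a b) c - brA b (brA a c) = 0)
      ∧ (brA a (circA c b) + starA (brA b c) a - brA (starA b a) c
        + brA (circA b a) c - starA c (brA a b) - brA b (starA c a) = 0)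
      ∧ (starA (circA c b) a - starA c (starA b a) + starA c (circA b a) = 0)
      ∧ (brA a (starA c b) + brA (circA b a) c - starA c (brA a b)
        - brA b (circA c a) - starA (brA a c) b = 0)
      ∧ (starA c (circA b a) - starA (circA c a) b = 0)
      ∧ (starA (starA c b) a - starA c (starA b a)
        + (2 : k) • starA c (circA b a) - starA (starA c a) b = 0) := by
    intro a b c
    exact poly22 (k := k) _ _ _ _ _ _
      (fun lam mu => by
        linear_combination (norm := module) (hcomp lam mu a b c).2.2)
  have hE4 := fun (a b c : A) => (key1 a b c).1
  have hE5 := fun (a b c : A) => (key0 a b c).2.2.1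
  have hE10 := fun (a b c : A) => (key0 a b c).1
  -- Leibniz components
  have hLcomp : ∀ (lam mu : k) (a b c : A),
      (circA (mulA b c) a = mulA b (circA c a))
      ∧ (lam • starA (mulA b c) a + brA a (mulA b c)
        = (lam • (mulA (starA b a) c - mulA (circA b a) c)
            + mu • (- mulA (circA b a) c) + mulA (brA a b) c)
          + (mu • mulA b (circA c a) + lam • mulA b (starA c a)
            + mulA b (brA a c))) := by
    intro lam mu a b c
    have hL := hleibC lam mu (emb k A a) (emb k A b) (emb k A c)
    rw [leib_lhs hbrFs hbrGen hmulGen lam mu a b c,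
      leib_rhs1 hmulBil hmulFs hmulSesq hbrGen hmulGen lam mu a b c,
      leib_rhs2 hmulBil hmulFs hmulSesq hbrGen hmulGen lam mu a b c] at hL
    refine ⟨?_, ?_⟩
    · have := DFunLike.congr_fun hL 1
      simpa using this
    · have := DFunLike.congr_fun hL 0
      simpa using this
  have hF1 : ∀ a b c : A, circA (mulA b c) a = mulA b (circA c a) :=
    fun a b c => (hLcomp 0 0 a b c).1
  have keyL : ∀ a b c : A,
      (brA a (mulA b c) - mulA (brA a b) c - mulA b (brA a c) = 0)
      ∧ (starA (mulA b c) a - mulA (starA b a) c + mulA (circA b a) c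
        - mulA b (starA c a) = 0)
      ∧ (mulA (circA b a) c - mulA b (circA c a) = 0) := by
    intro a b c
    have h := poly22 (k := k)
      (brA a (mulA b c) - mulA (brA a b) c - mulA b (brA a c))
      (starA (mulA b c) a - mulA (starA b a) c + mulA (circA b a) c
        - mulA b (starA c a))
      0
      (mulA (circA b a) c - mulA b (circA c a))
      0 0
      (fun lam mu => by
        linear_combination (norm := module) (hLcomp lam mu a b c).2)
    exact ⟨h.1, h.2.1, h.2.2.2.1⟩
  -- assemble the PGD structure
  have hN2 : ∀ x y z : A, circA (circA x y) z = circA (circA x z) y :=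
    fun x y z => hE1 z y x
  have hN1 : ∀ x y z : A, circA (circA x y) z - circA x (circA y z)
      = circA (circA y x) z - circA y (circA x z) := by
    intro x y z
    have h5 := hE5 x z y
    simp only [hstarA, map_add, LinearMap.add_apply] at h5
    linear_combination (norm := module) hN2 x y z - hN2 y x z - h5
  have hskoL : ∀ x y z : A, circA (brA x y) z = - circA (brA y x) z := by
    intro x y z; rw [hskA x y, map_neg, LinearMap.neg_apply]
  have hskBR : ∀ x y z : A, brA z (brA x y) = - brA z (brA y x) := by
    intro x y z; rw [hskA x y, map_neg]
  have hGD : ∀ a b c : A, brA (circA a b) c - brA (circA a c) b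
      + circA (brA a b) c - circA (brA a c) b - circA a (brA b c) = 0 := by
    intro a b c
    linear_combination (norm := module) hE4 b c a + hskoL a b c - hskoL a c b
      - hskA b (circA a c) + hskA c (circA a b)
  have hjcA : ∀ a b c : A, brA (brA a b) c + brA (brA b c) a + brA (brA c a) b = 0 := by
    intro a b c
    linear_combination (norm := module) (-1 : k) • hE10 a b c - hE10 c a b
      - hE10 c b a + hskBR a b c - hskBR a c b + hskA a (brA b c) - hskA a (brA c b)
  have hD1 : ∀ x y z : A, circA (mulA x y) z = mulA x (circA y z) :=
    fun x y z => hF1 z x y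
  have hLB : ∀ x y z : A, brA x (mulA y z) = mulA (brA x y) z + mulA y (brA x z) := by
    intro x y z
    linear_combination (norm := module) (keyL x y z).1
  have hD2 : ∀ a b c : A, circA a (mulA b c)
      = mulA (circA a b) c + mulA b (circA a c) := by
    intro a b c
    have h2 := (keyL a b c).2.1
    simp only [hstarA, map_add, LinearMap.add_apply] at h2
    linear_combination (norm := module) h2 - hF1 a b c
  exact ⟨⟨⟨⟨hN1, hN2⟩, ⟨hskA, hjcA⟩, hGD⟩, ⟨⟨hcm, has⟩, ⟨hskA, hjcA⟩, hLB⟩,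
    ⟨⟨hN1, hN2⟩, ⟨hcm, has⟩, hD1, hD2⟩⟩, hstarA⟩

end Main6

/-- On the free `k[∂]`-module `P = k[∂] ⊗ A`, the operations extending
`[a_λ b] = ∂(b∘a) + λ(b⋆a) + [a,b]` and `a_λ b = a·b` (by sesquilinearity
and bilinearity) give a Poisson conformal algebra if and only if
`(A, ∘, ·, [·,·])` is a Poisson-Gel'fand-Dorfman algebra and
`a⋆b = a∘b + b∘a`. -/
theorem stmt7 {k A : Type*} [Field k] [CharZero k] [AddCommGroup A] [Module k A]
    (circA mulA brA starA : A →ₗ[k] A →ₗ[k] A)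
    (br mul : ℕ → (ℕ →₀ A) → (ℕ →₀ A) → (ℕ →₀ A))
    (hbrBil : BilinMap k br) (hmulBil : BilinMap k mul)
    (hbrFs : FinSuppFam br) (hmulFs : FinSuppFam mul)
    (hbrSesq : ConfSesq (shft k A) (shft k A) br)
    (hmulSesq : ConfSesq (shft k A) (shft k A) mul)
    -- values on the generators:
    (hbrGen : ∀ (lam : k) (a b : A),
      cev br (sc lam) (emb k A a) (emb k A b)
        = shft k A (emb k A (circA b a)) + lam • emb k A (starA b a) + emb k A (brA a b))
    (hmulGen : ∀ (lam : k) (a b : A),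
      cev mul (sc lam) (emb k A a) (emb k A b) = emb k A (mulA a b)) :
    IsPoissonConf (shft k A) br mul ↔
      (IsPGDAlg circA mulA brA ∧ ∀ a b : A, starA a b = circA a b + circA b a) := by
  constructor
  · intro hconf
    exact fwd hbrBil hmulBil hbrFs hmulFs hbrSesq hmulSesq hbrGen hmulGen hconf
  · rintro ⟨⟨⟨⟨hN1, hN2⟩, ⟨hsk, hjc⟩, hGD⟩, ⟨⟨hcm, has⟩, -, hLB⟩, -, -, hD1, hD2⟩, hstar⟩
    exact ⟨⟨hbrBil, hbrFs, hbrSesq,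
        skew_bwd hbrBil hbrFs hbrSesq hbrGen hsk hstar,
        jac_bwd hbrBil hbrFs hbrSesq hbrGen hN1 hN2 hGD hsk hjc hstar⟩,
      ⟨hmulBil, hmulFs, hmulSesq,
        comm_bwd hmulBil hmulFs hmulSesq hmulGen hcm,
        assoc_bwd hmulBil hmulFs hmulSesq hmulGen has⟩,
      leib_bwd hbrBil hbrFs hbrSesq hbrGen hmulBil hmulFs hmulSesq hmulGen
        hcm hD1 hD2 hLB hstar⟩
end

section
/- Let A be a vector space over a field k of characteristic 0 with binary operations ·, ∘, ⋆, and P = k[∂] ⊗ A the free k[∂]-module. Define on generators [a_λ b] := ∂(b∘a) + λ(b⋆a) and a_λ b := a·b. Then (P, [·_λ·], ·_λ·) is a Poisson conformal algebra if and only if (A, ∘, ·) is a differential Novikov-Poisson algebra and a⋆b = a∘b + b∘a for all a, b ∈ A. -/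
namespace Stmt8Aux

open Function

variable {k : Type*} [Field k]

section M
variable {M : Type*} [AddCommGroup M] [Module k M]

lemma sc_apply (c : k) (x : M) : sc (k := k) c x = c • x := rfl

lemma sc_pow_apply (c : k) (n : ℕ) (x : M) : ((sc (k := k) c) ^ n) x = c ^ n • x := by
  rw [sc, smul_pow, one_pow]; rfl

set_option linter.unusedSectionVars false

lemma poly_key [CharZero k] {f : ℕ → M} (hf : (Function.support f).Finite)
    (h : ∀ lam : k, ∑ᶠ n, lam ^ n • f n = 0) : ∀ n, f n = 0 := by
  intro n
  rw [← Module.forall_dual_apply_eq_zero_iff k]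
  intro φ
  classical
  set p : Polynomial k := ∑ i ∈ hf.toFinset, Polynomial.monomial i (φ (f i)) with hp
  have hev : ∀ lam : k, p.eval lam = 0 := by
    intro lam
    have h1 : ∑ᶠ n, lam ^ n • f n = ∑ i ∈ hf.toFinset, lam ^ i • f i := by
      apply finsum_eq_finset_sum_of_support_subset
      intro x hx
      have : f x ≠ 0 := by
        intro h0; apply hx; simp [h0]
      simpa using this
    have h2 := congrArg φ ((h1.symm).trans (h lam))
    simpa [p, Polynomial.eval_finset_sum, map_sum, map_smul, smul_eq_mul, mul_comm] using h2
  have hp0 : p = 0 := Polynomial.funext (by simpa using hev)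
  by_cases hn : f n = 0
  · exact congrArg φ hn |>.trans (map_zero φ)
  · have hmem : n ∈ hf.toFinset := by simpa using hn
    have := congrArg (fun q => Polynomial.coeff q n) hp0
    simp only [p, Polynomial.finset_sum_coeff, Polynomial.coeff_monomial,
      Polynomial.coeff_zero] at this
    rwa [Finset.sum_eq_single n (fun i _ hi => if_neg hi) (fun h => absurd hmem h), if_pos rfl]
      at this

lemma poly_ext [CharZero k] {f g : ℕ → M} (hf : (Function.support f).Finite)
    (hg : (Function.support g).Finite)
    (h : ∀ lam : k, ∑ᶠ n, lam ^ n • f n = ∑ᶠ n, lam ^ n • g n) : ∀ n, f n = g n := by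
  have hfin : (Function.support fun n => f n - g n).Finite := by
    apply Set.Finite.subset (hf.union hg)
    intro n hn
    by_contra hc
    simp only [Set.mem_union, mem_support, not_or, not_not] at hc
    exact hn (by simp [hc.1, hc.2])
  have key := poly_key (k := k) hfin ?_
  · intro n; have := key n; rwa [sub_eq_zero] at this
  · intro lam
    have h1 : (Function.support fun n => lam ^ n • f n).Finite := by
      apply hf.subset
      intro n hn
      by_contra hc
      simp only [mem_support, not_not] at hc
      exact hn (by simp [hc])
    have h2 : (Function.support fun n => lam ^ n • g n).Finite := by
      apply hg.subset
      intro n hn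
      by_contra hc
      simp only [mem_support, not_not] at hc
      exact hn (by simp [hc])
    calc ∑ᶠ n, lam ^ n • (f n - g n)
        = ∑ᶠ n, (lam ^ n • f n - lam ^ n • g n) := by simp [smul_sub]
      _ = ∑ᶠ n, lam ^ n • f n - ∑ᶠ n, lam ^ n • g n := finsum_sub_distrib h1 h2
      _ = 0 := by rw [h lam, sub_self]


/-- support of pointwise image families -/
lemma supp_pow_smul (lam : k) (f : ℕ → M) :
    (Function.support fun n => lam ^ n • f n) ⊆ Function.support f := by
  intro n hn
  by_contra hc
  simp only [mem_support, not_not] at hc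
  exact hn (by simp [hc])

lemma supp_pow_app (T : Module.End k M) (f : ℕ → M) :
    (Function.support fun n => (T ^ n) (f n)) ⊆ Function.support f := by
  intro n hn
  by_contra hc
  simp only [mem_support, not_not] at hc
  exact hn (by simp [hc])

/-- the shifted family -/
def shf (f : ℕ → M) : ℕ → M := fun n => match n with | 0 => 0 | n+1 => f n

lemma supp_shf (f : ℕ → M) : Function.support (shf f) ⊆ Nat.succ '' Function.support f := by
  intro n hn
  match n with
  | 0 => simp [shf] at hn
  | n+1 => exact ⟨n, by simpa [shf] using hn, rfl⟩

lemma finsum_pow_shf (T : Module.End k M) (f : ℕ → M) (hf : (Function.support f).Finite) :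
    ∑ᶠ n, (T ^ n) (shf f n) = T (∑ᶠ n, (T ^ n) (f n)) := by
  classical
  have hmap : T (∑ᶠ n, (T ^ n) (f n)) = ∑ᶠ n, T ((T ^ n) (f n)) :=
    T.toAddMonoidHom.map_finsum (hf.subset (supp_pow_app T f))
  rw [hmap]
  rw [finsum_eq_finset_sum_of_support_subset (fun n => (T ^ n) (shf f n))
      (s := hf.toFinset.image Nat.succ) ?hs,
    finsum_eq_finset_sum_of_support_subset (fun n => T ((T ^ n) (f n)))
      (s := hf.toFinset) ?ht]
  · rw [Finset.sum_image (fun a _ b _ h => Nat.succ_injective h)]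
    apply Finset.sum_congr rfl
    intro i _
    show (T ^ (i+1)) (f i) = T ((T ^ i) (f i))
    rw [pow_succ', Module.End.mul_apply]
  case hs =>
    intro n hn
    obtain ⟨i, hi, rfl⟩ := supp_shf f (supp_pow_app T (shf f) hn)
    exact Finset.mem_coe.2 (Finset.mem_image_of_mem _ (hf.mem_toFinset.2 hi))
  case ht =>
    intro n hn
    have : f n ≠ 0 := by
      intro h0; apply hn; show T ((T ^ n) (f n)) = 0; simp [h0]
    simpa using this

lemma finsum_pow_shf_smul (lam : k) (f : ℕ → M) (hf : (Function.support f).Finite) :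
    ∑ᶠ n, lam ^ n • shf f n = lam • ∑ᶠ n, lam ^ n • f n := by
  have := finsum_pow_shf (sc (k := k) lam) f hf
  simpa only [sc_pow_apply, sc_apply] using this

lemma finsum_eq_add01 (f : ℕ → M) (h2 : ∀ n, f (n+2) = 0) : ∑ᶠ n, f n = f 0 + f 1 := by
  classical
  rw [finsum_eq_finset_sum_of_support_subset f (s := {0, 1}) ?hs]
  · simp [Finset.sum_pair]
  case hs =>
    intro n hn
    match n with
    | 0 => simp
    | 1 => simp
    | n+2 => exact absurd (h2 n) hn

end M

/-! ### extraction of low-degree coefficients -/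

section Ext
set_option linter.unusedSectionVars false
variable {M : Type*} [AddCommGroup M] [Module k M] [CharZero k]

lemma ext_deg1 {x0 x1 y0 y1 : M}
    (h : ∀ lam : k, x0 + lam • x1 = y0 + lam • y1) : x0 = y0 ∧ x1 = y1 := by
  have h0 := h 0
  simp only [zero_smul, add_zero] at h0
  have h1 := h 1
  simp only [one_smul] at h1
  refine ⟨h0, ?_⟩
  have := h1
  rw [h0] at this
  exact add_left_cancel this

lemma ext_deg2 {x0 x1 x2 y0 y1 y2 : M}
    (h : ∀ lam : k, x0 + lam • x1 + (lam * lam) • x2 = y0 + lam • y1 + (lam * lam) • y2) :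
    x0 = y0 ∧ x1 = y1 ∧ x2 = y2 := by
  have h0 : x0 = y0 := by linear_combination (norm := module) h 0
  have h2 : (2 : k) • x2 = (2 : k) • y2 := by
    linear_combination (norm := module) h 1 + h (-1) - (2 : k) • h 0
  have hx2 : x2 = y2 := by
    have h2' : (2 : k) • (x2 - y2) = 0 := by rw [smul_sub, h2, sub_self]
    rcases smul_eq_zero.mp h2' with h | h
    · exact absurd h two_ne_zero
    · exact sub_eq_zero.mp h
  have hx1 : x1 = y1 := by linear_combination (norm := module) h 1 - h 0 - hx2
  exact ⟨h0, hx1, hx2⟩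

end Ext

section Commute0

lemma commute_sc' {P : Type*} [AddCommGroup P] [Module k P] (c : k) (T : Module.End k P) :
    Commute (sc (k := k) c) T :=
  (Commute.one_left T).smul_left c

lemma commute_negsub' {P : Type*} [AddCommGroup P] [Module k P] (c : k) (D : Module.End k P) :
    Commute (-(sc (k := k) c) - D) D :=
  ((commute_sc' c D).neg_left).sub_left (Commute.refl D)

end Commute0

/-! ### cev toolbox -/

section Cev
set_option linter.unusedSectionVars false
variable {P : Type*} [AddCommGroup P] [Module k P] {m : ℕ → P → P → P}

lemma cev_finite (hfs : FinSuppFam m) (T : Module.End k P) (a b : P) :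
    (Function.support fun n => (T ^ n) (m n a b)).Finite :=
  (hfs a b).subset (supp_pow_app T _)

lemma cev_sc (m : ℕ → P → P → P) (lam : k) (a b : P) :
    cev m (sc lam) a b = ∑ᶠ n, lam ^ n • m n a b := by
  unfold cev
  exact finsum_congr fun n => sc_pow_apply lam n _

lemma cev_zeroL (hb : BilinMap k m) (T : Module.End k P) (b : P) :
    cev m T 0 b = 0 := by
  have h0 : ∀ n, m n (0 : P) b = 0 := by
    intro n
    have := (hb n 0 0 b b 0).2.1
    simpa using this
  unfold cev
  simp [h0]

lemma cev_zeroR (hb : BilinMap k m) (T : Module.End k P) (a : P) :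
    cev m T a 0 = 0 := by
  have h0 : ∀ n, m n a (0 : P) = 0 := by
    intro n
    have := (hb n a a 0 0 0).2.2.2
    simpa using this
  unfold cev
  simp [h0]

lemma cev_addL (hb : BilinMap k m) (hfs : FinSuppFam m) (T : Module.End k P) (a a' b : P) :
    cev m T (a + a') b = cev m T a b + cev m T a' b := by
  unfold cev
  rw [← finsum_add_distrib (cev_finite hfs T a b) (cev_finite hfs T a' b)]
  exact finsum_congr fun n => by rw [(hb n a a' b b 0).1, map_add]

lemma cev_addR (hb : BilinMap k m) (hfs : FinSuppFam m) (T : Module.End k P) (a b b' : P) :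
    cev m T a (b + b') = cev m T a b + cev m T a b' := by
  unfold cev
  rw [← finsum_add_distrib (cev_finite hfs T a b) (cev_finite hfs T a b')]
  exact finsum_congr fun n => by rw [(hb n a a b b' 0).2.2.1, map_add]

lemma cev_smulL (hb : BilinMap k m) (hfs : FinSuppFam m) (T : Module.End k P)
    (r : k) (a b : P) : cev m T (r • a) b = r • cev m T a b := by
  unfold cev
  rw [smul_finsum' r (cev_finite hfs T a b)]
  exact finsum_congr fun n => by rw [(hb n a a b b r).2.1, map_smul]

lemma cev_smulR (hb : BilinMap k m) (hfs : FinSuppFam m) (T : Module.End k P)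
    (r : k) (a b : P) : cev m T a (r • b) = r • cev m T a b := by
  unfold cev
  rw [smul_finsum' r (cev_finite hfs T a b)]
  exact finsum_congr fun n => by rw [(hb n a a b b r).2.2.2, map_smul]

variable [CharZero k] {D : Module.End k P}

lemma coeffL (hfs : FinSuppFam m) (hs : ConfSesq D D m) (x y : P) :
    ∀ n, m n (D x) y = -shf (fun j => m j x y) n := by
  apply poly_ext (k := k) (hfs (D x) y)
  · exact Set.Finite.subset ((hfs x y).image Nat.succ) (by
      intro n hn
      have : shf (fun j => m j x y) n ≠ 0 := fun h0 => hn (by simp [h0])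
      exact supp_shf _ this)
  intro lam
  have hr : ∑ᶠ n, lam ^ n • -shf (fun j => m j x y) n
      = -(∑ᶠ n, lam ^ n • shf (fun j => m j x y) n) := by
    rw [← finsum_neg_distrib]
    exact finsum_congr fun n => smul_neg _ _
  rw [hr, ← cev_sc, (hs lam x y).1, cev_sc, neg_smul,
    ← finsum_pow_shf_smul lam _ (hfs x y)]

lemma coeffR (hfs : FinSuppFam m) (hs : ConfSesq D D m) (x y : P) :
    ∀ n, m n x (D y) = D (m n x y) + shf (fun j => m j x y) n := by
  apply poly_ext (k := k) (hfs x (D y))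
  · apply Set.Finite.subset (((hfs x y).image Nat.succ).union (hfs x y))
    intro n hn
    by_contra hc
    simp only [Set.mem_union, not_or] at hc
    have h1 : shf (fun j => m j x y) n = 0 := by
      by_contra h
      exact hc.1 (supp_shf _ h)
    have h2 : m n x y = 0 := by
      by_contra h
      exact hc.2 h
    exact hn (by simp [h1, h2])
  intro lam
  have hfin1 : (Function.support fun n => lam ^ n • D (m n x y)).Finite := by
    apply (hfs x y).subset
    intro n hn
    by_contra hc
    simp only [Function.mem_support, not_not] at hc
    exact hn (by simp [hc])
  have hfin2 : (Function.support fun n => lam ^ n • shf (fun j => m j x y) n).Finite := by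
    apply Set.Finite.subset ((hfs x y).image Nat.succ)
    intro n hn
    have : shf (fun j => m j x y) n ≠ 0 := by
      intro h0; exact hn (by simp [h0])
    exact supp_shf _ this
  have hD : D (∑ᶠ n, lam ^ n • m n x y) = ∑ᶠ n, lam ^ n • D (m n x y) := by
    have h1 : D (∑ᶠ n, lam ^ n • m n x y) = ∑ᶠ n, D (lam ^ n • m n x y) :=
      D.toAddMonoidHom.map_finsum ((hfs x y).subset (supp_pow_smul lam _))
    rw [h1]
    exact finsum_congr fun n => by rw [map_smul]
  calc ∑ᶠ n, lam ^ n • m n x (D y)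
      = cev m (sc lam) x (D y) := (cev_sc m lam x (D y)).symm
    _ = D (cev m (sc lam) x y) + lam • cev m (sc lam) x y := (hs lam x y).2
    _ = ∑ᶠ n, lam ^ n • D (m n x y)
        + ∑ᶠ n, lam ^ n • shf (fun j => m j x y) n := by
        rw [cev_sc, hD, ← finsum_pow_shf_smul lam _ (hfs x y)]
    _ = ∑ᶠ n, lam ^ n • (D (m n x y) + shf (fun j => m j x y) n) := by
        rw [← finsum_add_distrib hfin1 hfin2]
        exact finsum_congr fun n => (smul_add _ _ _).symm

lemma cev_DL (hfs : FinSuppFam m) (hs : ConfSesq D D m) (T : Module.End k P) (x y : P) :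
    cev m T (D x) y = -T (cev m T x y) := by
  unfold cev
  have h1 : ∀ n, (T ^ n) (m n (D x) y) = -((T ^ n) (shf (fun j => m j x y) n)) := by
    intro n
    rw [coeffL hfs hs x y n, map_neg]
  rw [finsum_congr h1, finsum_neg_distrib, finsum_pow_shf T _ (hfs x y)]

lemma cev_DR (hfs : FinSuppFam m) (hs : ConfSesq D D m) (T : Module.End k P)
    (hT : Commute T D) (x y : P) :
    cev m T x (D y) = D (cev m T x y) + T (cev m T x y) := by
  unfold cev
  have h1 : ∀ n, (T ^ n) (m n x (D y))
      = D ((T ^ n) (m n x y)) + (T ^ n) (shf (fun j => m j x y) n) := by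
    intro n
    rw [coeffR hfs hs x y n, map_add]
    congr 1
    have hc : Commute (T ^ n) D := (hT.pow_left n)
    calc (T ^ n) (D (m n x y)) = ((T ^ n) * D) (m n x y) := rfl
      _ = (D * (T ^ n)) (m n x y) := by rw [hc.eq]
      _ = D ((T ^ n) (m n x y)) := rfl
  rw [finsum_congr h1, finsum_add_distrib ?f1 ?f2, finsum_pow_shf T _ (hfs x y)]
  · congr 1
    have hmap : D (∑ᶠ n, (T ^ n) (m n x y)) = ∑ᶠ n, D ((T ^ n) (m n x y)) :=
      D.toAddMonoidHom.map_finsum (cev_finite hfs T x y)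
    rw [hmap]
  case f1 =>
    apply (hfs x y).subset
    intro n hn
    by_contra hc
    simp only [Function.mem_support, not_not] at hc
    exact hn (by simp [hc])
  case f2 =>
    apply Set.Finite.subset ((hfs x y).image Nat.succ)
    intro n hn
    have : shf (fun j => m j x y) n ≠ 0 := by
      intro h0; exact hn (by simp [h0])
    exact supp_shf _ this

lemma cev_DL_sc (hfs : FinSuppFam m) (hs : ConfSesq D D m) (lam : k) (x y : P) :
    cev m (sc lam) (D x) y = (-lam) • cev m (sc lam) x y := by
  rw [cev_DL hfs hs, sc_apply, neg_smul]

lemma cev_DR_sc (hfs : FinSuppFam m) (hs : ConfSesq D D m) (lam : k) (x y : P) :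
    cev m (sc lam) x (D y) = D (cev m (sc lam) x y) + lam • cev m (sc lam) x y := by
  rw [cev_DR hfs hs _ (commute_sc' lam D), sc_apply]

lemma cev_DL_ns (hfs : FinSuppFam m) (hs : ConfSesq D D m) (lam : k) (x y : P) :
    cev m (-(sc lam) - D) (D x) y
      = lam • cev m (-(sc lam) - D) x y + D (cev m (-(sc lam) - D) x y) := by
  rw [cev_DL hfs hs]
  simp only [LinearMap.sub_apply, LinearMap.neg_apply, sc_apply]
  abel

lemma cev_DR_ns (hfs : FinSuppFam m) (hs : ConfSesq D D m) (lam : k) (x y : P) :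
    cev m (-(sc lam) - D) x (D y) = (-lam) • cev m (-(sc lam) - D) x y := by
  rw [cev_DR hfs hs _ (commute_negsub' lam D)]
  simp only [LinearMap.sub_apply, LinearMap.neg_apply, sc_apply, neg_smul]
  abel

end Cev

section Gen
set_option linter.unusedSectionVars false
variable {A : Type*} [AddCommGroup A] [Module k A]

lemma e_apply (a : A) : emb k A a = Finsupp.single 0 a := rfl

lemma D_single (n : ℕ) (a : A) :
    shft k A (Finsupp.single n a) = Finsupp.single (n + 1) a := by
  show Finsupp.mapDomain Nat.succ (Finsupp.single n a) = Finsupp.single (n + 1) a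
  rw [Finsupp.mapDomain_single]

lemma e_inj : Function.Injective (emb k A) := by
  intro a b h
  have := congrArg (fun f => f 0) h
  simpa [e_apply, Finsupp.single_apply] using this

lemma D_inj : Function.Injective (shft k A) := by
  intro x y h
  exact Finsupp.mapDomain_injective Nat.succ_injective h

lemma gen_ind {Q : (ℕ →₀ A) → Prop} (h0 : Q 0)
    (hadd : ∀ x y, Q x → Q y → Q (x + y))
    (he : ∀ a, Q (emb k A a)) (hD : ∀ x, Q x → Q (shft k A x)) : ∀ x, Q x := by
  have hsingle : ∀ (n : ℕ) (a : A), Q (Finsupp.single n a) := by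
    intro n
    induction n with
    | zero => intro a; exact he a
    | succ n ih =>
      intro a
      have := hD _ (ih a)
      rwa [D_single] at this
  intro x
  induction x using Finsupp.induction with
  | zero => exact h0
  | single_add n a f _ _ hf => exact hadd _ _ (hsingle n a) hf

end Gen

section Main
set_option linter.unusedSectionVars false
set_option maxHeartbeats 1000000
variable {A : Type*} [CharZero k] [AddCommGroup A] [Module k A]
  (circA mulA starA : A →ₗ[k] A →ₗ[k] A)
  (br mul : ℕ → (ℕ →₀ A) → (ℕ →₀ A) → (ℕ →₀ A))

local notation "D" => shft k A
local notation "e" => emb k A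

section MulGen
variable (hmulFs : FinSuppFam mul)
  (hmulGen : ∀ (lam : k) (a b : A),
      cev mul (sc lam) (emb k A a) (emb k A b) = emb k A (mulA a b))

include hmulFs hmulGen

lemma mul_coeff (a b : A) (n : ℕ) :
    mul n (e a) (e b) = if n = 0 then e (mulA a b) else 0 := by
  apply poly_ext (k := k) (hmulFs _ _) ?fin ?ev n
  case fin =>
    apply Set.Finite.subset (Set.finite_singleton 0)
    intro j hj
    by_contra hc
    have hj0 : j ≠ 0 := by simpa using hc
    exact hj (by simp [if_neg hj0])
  case ev =>
    intro lam
    rw [← cev_sc, hmulGen lam a b]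
    rw [finsum_eq_single _ 0 (fun n hn => by simp [hn])]
    simp

lemma cev_mul_gen (T : Module.End k (ℕ →₀ A)) (a b : A) :
    cev mul T (e a) (e b) = e (mulA a b) := by
  unfold cev
  rw [finsum_eq_single _ 0 (fun n hn => by rw [mul_coeff mulA mul hmulFs hmulGen, if_neg hn]; simp)]
  rw [mul_coeff mulA mul hmulFs hmulGen]
  simp

end MulGen

section BrGen
variable (hbrFs : FinSuppFam br)
  (hbrGen : ∀ (lam : k) (a b : A),
      cev br (sc lam) (emb k A a) (emb k A b)
        = shft k A (emb k A (circA b a)) + lam • emb k A (starA b a))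

include hbrFs hbrGen

lemma br_coeff (a b : A) (n : ℕ) :
    br n (e a) (e b) = if n = 0 then D (e (circA b a))
      else if n = 1 then e (starA b a) else 0 := by
  apply poly_ext (k := k) (hbrFs _ _) ?fin ?ev n
  case fin =>
    apply Set.Finite.subset (Set.finite_Icc 0 1)
    intro j hj
    by_contra hc
    simp only [Set.mem_Icc, not_and, Nat.le_zero] at hc
    match j, hj with
    | 0, hj => simp at hc
    | 1, hj => simp at hc
    | (j+2), hj => exact hj (by simp)
  case ev =>
    intro lam
    rw [← cev_sc, hbrGen lam a b]
    rw [finsum_eq_add01 _ (fun n => by simp)]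
    simp

lemma cev_br_gen (T : Module.End k (ℕ →₀ A)) (a b : A) :
    cev br T (e a) (e b) = D (e (circA b a)) + T (e (starA b a)) := by
  unfold cev
  rw [finsum_eq_add01 _ (fun n => by
    rw [br_coeff circA starA br hbrFs hbrGen]
    simp)]
  rw [br_coeff circA starA br hbrFs hbrGen, br_coeff circA starA br hbrFs hbrGen]
  simp

end BrGen

section Red
variable (hbrBil : BilinMap k br) (hmulBil : BilinMap k mul)
  (hbrFs : FinSuppFam br) (hmulFs : FinSuppFam mul)
  (hbrSesq : ConfSesq (shft k A) (shft k A) br)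
  (hmulSesq : ConfSesq (shft k A) (shft k A) mul)
  (hbrGen : ∀ (lam : k) (a b : A),
      cev br (sc lam) (emb k A a) (emb k A b)
        = shft k A (emb k A (circA b a)) + lam • emb k A (starA b a))
  (hmulGen : ∀ (lam : k) (a b : A),
      cev mul (sc lam) (emb k A a) (emb k A b) = emb k A (mulA a b))

include hmulBil hmulFs hmulSesq hmulGen in
lemma comm_red :
    (∀ (lam : k) (a b : ℕ →₀ A), cev mul (sc lam) a b = cev mul (-(sc lam) - D) b a) ↔
    (∀ a b : A, mulA a b = mulA b a) := by
  constructor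
  · intro h a b
    have h2 := h 0 (e a) (e b)
    rw [cev_mul_gen mulA mul hmulFs hmulGen, cev_mul_gen mulA mul hmulFs hmulGen] at h2
    exact e_inj h2
  · intro h
    suffices main : ∀ x y : (ℕ →₀ A), ∀ lam : k,
        cev mul (sc lam) x y = cev mul (-(sc lam) - D) y x by
      intro lam a b; exact main a b lam
    refine gen_ind (k := k) ?_ ?_ ?_ ?_
    · intro y lam
      rw [cev_zeroL hmulBil, cev_zeroR hmulBil]
    · intro x x' hx hx' y lam
      rw [cev_addL hmulBil hmulFs, cev_addR hmulBil hmulFs, hx, hx']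
    · intro a
      refine gen_ind (k := k) ?_ ?_ ?_ ?_
      · intro lam
        rw [cev_zeroR hmulBil, cev_zeroL hmulBil]
      · intro y y' hy hy' lam
        rw [cev_addR hmulBil hmulFs, cev_addL hmulBil hmulFs, hy, hy']
      · intro b lam
        rw [cev_mul_gen mulA mul hmulFs hmulGen, cev_mul_gen mulA mul hmulFs hmulGen, h a b]
      · intro y hy lam
        rw [cev_DR_sc hmulFs hmulSesq, cev_DL_ns hmulFs hmulSesq, hy lam]
        abel
    · intro x hx y lam
      rw [cev_DL_sc hmulFs hmulSesq, cev_DR_ns hmulFs hmulSesq, hx y lam]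

include hmulBil hmulFs hmulSesq hmulGen in
lemma assoc_red :
    (∀ (lam mu : k) (a b c : ℕ →₀ A),
      cev mul (sc (lam + mu)) (cev mul (sc lam) a b) c
        = cev mul (sc lam) a (cev mul (sc mu) b c)) ↔
    (∀ a b c : A, mulA (mulA a b) c = mulA a (mulA b c)) := by
  constructor
  · intro h a b c
    have h2 := h 0 0 (e a) (e b) (e c)
    rw [cev_mul_gen mulA mul hmulFs hmulGen, cev_mul_gen mulA mul hmulFs hmulGen,
      cev_mul_gen mulA mul hmulFs hmulGen, cev_mul_gen mulA mul hmulFs hmulGen] at h2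
    exact e_inj h2
  · intro h
    suffices main : ∀ a b c : (ℕ →₀ A), ∀ lam mu : k,
        cev mul (sc (lam + mu)) (cev mul (sc lam) a b) c
          = cev mul (sc lam) a (cev mul (sc mu) b c) by
      intro lam mu a b c; exact main a b c lam mu
    refine gen_ind (k := k) ?_ ?_ ?_ ?_
    · intro b c lam mu
      rw [cev_zeroL hmulBil, cev_zeroL hmulBil, cev_zeroL hmulBil]
    · intro x x' hx hx' b c lam mu
      rw [cev_addL hmulBil hmulFs, cev_addL hmulBil hmulFs, cev_addL hmulBil hmulFs,
        hx, hx']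
    · intro a
      refine gen_ind (k := k) ?_ ?_ ?_ ?_
      · intro c lam mu
        rw [cev_zeroR hmulBil, cev_zeroL hmulBil, cev_zeroL hmulBil, cev_zeroR hmulBil]
      · intro y y' hy hy' c lam mu
        rw [cev_addR hmulBil hmulFs, cev_addL hmulBil hmulFs, cev_addL hmulBil hmulFs,
          cev_addR hmulBil hmulFs, hy, hy']
      · intro b
        refine gen_ind (k := k) ?_ ?_ ?_ ?_
        · intro lam mu
          rw [cev_zeroR hmulBil, cev_zeroR hmulBil, cev_zeroR hmulBil]
        · intro z z' hz hz' lam mu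
          rw [cev_addR hmulBil hmulFs, cev_addR hmulBil hmulFs, cev_addR hmulBil hmulFs,
            hz, hz']
        · intro c lam mu
          rw [cev_mul_gen mulA mul hmulFs hmulGen, cev_mul_gen mulA mul hmulFs hmulGen,
            cev_mul_gen mulA mul hmulFs hmulGen, cev_mul_gen mulA mul hmulFs hmulGen,
            h a b c]
        · intro c hc lam mu
          have hIH := hc lam mu
          have hD := congrArg (D) hIH
          simp only [cev_DR_sc hmulFs hmulSesq, cev_addR hmulBil hmulFs,
            cev_smulR hmulBil hmulFs, cev_DR_sc hmulFs hmulSesq]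
          linear_combination (norm := module) hD + (lam + mu) • hIH
      · intro b hb c lam mu
        have hIH := hb c lam mu
        simp only [cev_DR_sc hmulFs hmulSesq, cev_DL_sc hmulFs hmulSesq,
          cev_addL hmulBil hmulFs, cev_smulL hmulBil hmulFs,
          cev_smulR hmulBil hmulFs]
        linear_combination (norm := module) (-mu : k) • hIH
    · intro a ha b c lam mu
      have hIH := ha b c lam mu
      simp only [cev_DL_sc hmulFs hmulSesq, cev_smulL hmulBil hmulFs]
      linear_combination (norm := module) (-lam : k) • hIH


include hbrBil hbrFs hbrSesq hbrGen in
lemma skew_red :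
    (∀ (lam : k) (a b : ℕ →₀ A), cev br (sc lam) a b = -cev br (-(sc lam) - D) b a) ↔
    (∀ a b : A, starA a b = circA a b + circA b a) := by
  constructor
  · intro h a b
    have h' : ∀ lam : k,
        D (e (circA b a)) + lam • (e (starA b a))
          = (D (e (starA a b)) - D (e (circA a b))) + lam • (e (starA a b)) := by
      intro lam
      have h2 := h lam (e a) (e b)
      rw [cev_br_gen circA starA br hbrFs hbrGen, cev_br_gen circA starA br hbrFs hbrGen] at h2
      simp only [LinearMap.sub_apply, LinearMap.neg_apply, sc_apply] at h2
      linear_combination (norm := module) h2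
    obtain ⟨h0, -⟩ := ext_deg1 h'
    have h0' : e (circA b a) = e (starA a b - circA a b) := by
      apply D_inj (k := k)
      rw [map_sub, map_sub]
      linear_combination (norm := module) h0
    have hA := e_inj h0'
    linear_combination (norm := module) -hA
  · intro h
    suffices main : ∀ x y : (ℕ →₀ A), ∀ lam : k,
        cev br (sc lam) x y = -cev br (-(sc lam) - D) y x by
      intro lam a b; exact main a b lam
    refine gen_ind (k := k) ?_ ?_ ?_ ?_
    · intro y lam
      rw [cev_zeroL hbrBil, cev_zeroR hbrBil, neg_zero]
    · intro x x' hx hx' y lam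
      rw [cev_addL hbrBil hbrFs, cev_addR hbrBil hbrFs, hx, hx', neg_add]
    · intro a
      refine gen_ind (k := k) ?_ ?_ ?_ ?_
      · intro lam
        rw [cev_zeroR hbrBil, cev_zeroL hbrBil, neg_zero]
      · intro y y' hy hy' lam
        rw [cev_addR hbrBil hbrFs, cev_addL hbrBil hbrFs, hy, hy', neg_add]
      · intro b lam
        rw [cev_br_gen circA starA br hbrFs hbrGen, cev_br_gen circA starA br hbrFs hbrGen]
        simp only [h, map_add, LinearMap.sub_apply, LinearMap.neg_apply, sc_apply, smul_add]
        module
      · intro y hy lam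
        rw [cev_DR_sc hbrFs hbrSesq, cev_DL_ns hbrFs hbrSesq, hy lam]
        simp only [map_neg, smul_neg]
        abel
    · intro x hx y lam
      rw [cev_DL_sc hbrFs hbrSesq, cev_DR_ns hbrFs hbrSesq, hx y lam]
      simp only [map_neg, smul_neg, neg_neg]

include hbrBil hbrFs hbrSesq hbrGen hmulBil hmulFs hmulSesq hmulGen in
lemma leib_forward
    (h : ∀ (lam mu : k) (a b c : ℕ →₀ A),
      cev br (sc lam) a (cev mul (sc mu) b c)
        = cev mul (sc (lam + mu)) (cev br (sc lam) a b) c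
          + cev mul (sc mu) b (cev br (sc lam) a c)) :
    ∀ a b c : A,
      circA (mulA b c) a = mulA b (circA c a) ∧
      mulA b (circA c a) = mulA (circA b a) c ∧
      starA (mulA b c) a
        = mulA (starA b a) c - mulA (circA b a) c + mulA b (starA c a) := by
  intro a b c
  have key : ∀ lam mu : k,
      D (e (circA (mulA b c) a)) + lam • e (starA (mulA b c) a)
        + mu • (0 : ℕ →₀ A)
      = D (e (mulA b (circA c a)))
        + lam • (e (mulA (starA b a) c) - e (mulA (circA b a) c)
            + e (mulA b (starA c a)))
        + mu • (e (mulA b (circA c a)) - e (mulA (circA b a) c)) := by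
    intro lam mu
    have h2 := h lam mu (e a) (e b) (e c)
    simp only [cev_mul_gen mulA mul hmulFs hmulGen,
      cev_br_gen circA starA br hbrFs hbrGen, sc_apply,
      cev_addL hmulBil hmulFs, cev_addR hmulBil hmulFs,
      cev_smulL hmulBil hmulFs, cev_smulR hmulBil hmulFs,
      cev_DL_sc hmulFs hmulSesq, cev_DR_sc hmulFs hmulSesq] at h2
    linear_combination (norm := module) h2
  have e1 := ext_deg1 (fun lam : k => by
    linear_combination (norm := module) key lam 0 :
    ∀ lam : k, D (e (circA (mulA b c) a)) + lam • e (starA (mulA b c) a)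
      = D (e (mulA b (circA c a)))
        + lam • (e (mulA (starA b a) c) - e (mulA (circA b a) c)
            + e (mulA b (starA c a))))
  have e2 := ext_deg1 (fun mu : k => by
    linear_combination (norm := module) key 0 mu :
    ∀ mu : k, D (e (circA (mulA b c) a)) + mu • (0 : ℕ →₀ A)
      = D (e (mulA b (circA c a)))
        + mu • (e (mulA b (circA c a)) - e (mulA (circA b a) c)))
  refine ⟨?_, ?_, ?_⟩
  · have h0 := e1.1
    have := e_inj (D_inj (k := k) h0)
    exact this
  · have h2 := e2.2
    have : e (mulA b (circA c a)) = e (mulA (circA b a) c) := by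
      linear_combination (norm := module) -h2
    exact e_inj this
  · have h1 := e1.2
    have : e (starA (mulA b c) a)
        = e (mulA (starA b a) c - mulA (circA b a) c + mulA b (starA c a)) := by
      rw [map_add, map_sub]
      linear_combination (norm := module) h1
    exact e_inj this

include hbrBil hbrFs hbrSesq hbrGen hmulBil hmulFs hmulSesq hmulGen in
lemma leib_backward
    (hst : ∀ a b : A, starA a b = circA a b + circA b a)
    (hG1 : ∀ a b c : A, mulA (circA b a) c = mulA b (circA c a))
    (hG3 : ∀ a b c : A, circA (mulA b c) a = mulA b (circA c a))
    (hG4 : ∀ a b c : A, circA a (mulA b c) = mulA (circA a b) c + mulA b (circA a c)) :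
    ∀ (lam mu : k) (a b c : ℕ →₀ A),
      cev br (sc lam) a (cev mul (sc mu) b c)
        = cev mul (sc (lam + mu)) (cev br (sc lam) a b) c
          + cev mul (sc mu) b (cev br (sc lam) a c) := by
  suffices main : ∀ a b c : (ℕ →₀ A), ∀ lam mu : k,
      cev br (sc lam) a (cev mul (sc mu) b c)
        = cev mul (sc (lam + mu)) (cev br (sc lam) a b) c
          + cev mul (sc mu) b (cev br (sc lam) a c) by
    intro lam mu a b c; exact main a b c lam mu
  refine gen_ind (k := k) ?_ ?_ ?_ ?_
  · intro b c lam mu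
    simp only [cev_zeroL hbrBil, cev_zeroR hbrBil, cev_zeroL hmulBil, cev_zeroR hmulBil,
      add_zero, zero_add]
  · intro x x' hx hx' b c lam mu
    simp only [cev_addL hbrBil hbrFs, cev_addR hbrBil hbrFs, cev_addL hmulBil hmulFs,
      cev_addR hmulBil hmulFs]
    rw [hx, hx']
    abel
  · intro a
    refine gen_ind (k := k) ?_ ?_ ?_ ?_
    · intro c lam mu
      simp only [cev_zeroL hbrBil, cev_zeroR hbrBil, cev_zeroL hmulBil, cev_zeroR hmulBil,
        add_zero, zero_add]
    · intro y y' hy hy' c lam mu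
      simp only [cev_addL hbrBil hbrFs, cev_addR hbrBil hbrFs, cev_addL hmulBil hmulFs,
        cev_addR hmulBil hmulFs]
      rw [hy, hy']
      abel
    · intro b
      refine gen_ind (k := k) ?_ ?_ ?_ ?_
      · intro lam mu
        simp only [cev_zeroL hbrBil, cev_zeroR hbrBil, cev_zeroL hmulBil, cev_zeroR hmulBil,
          add_zero, zero_add]
      · intro z z' hz hz' lam mu
        simp only [cev_addL hbrBil hbrFs, cev_addR hbrBil hbrFs, cev_addL hmulBil hmulFs,
          cev_addR hmulBil hmulFs]
        rw [hz, hz']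
        abel
      · intro c lam mu
        simp only [cev_mul_gen mulA mul hmulFs hmulGen,
          cev_br_gen circA starA br hbrFs hbrGen, sc_apply,
          cev_addL hmulBil hmulFs, cev_addR hmulBil hmulFs,
          cev_smulL hmulBil hmulFs, cev_smulR hmulBil hmulFs,
          cev_DL_sc hmulFs hmulSesq, cev_DR_sc hmulFs hmulSesq]
        have T3 : D (e (circA (mulA b c) a)) = D (e (mulA b (circA c a))) := by
          rw [hG3 a b c]
        have E3 : e (circA (mulA b c) a) = e (mulA b (circA c a)) := by
          rw [hG3 a b c]
        have E4 : e (circA a (mulA b c)) = e (mulA (circA a b) c) + e (mulA b (circA a c)) := by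
          rw [hG4 a b c, map_add]
        have E1 : e (mulA (circA b a) c) = e (mulA b (circA c a)) := by
          rw [hG1 a b c]
        simp only [hst, map_add, LinearMap.add_apply]
        linear_combination (norm := module) T3 + lam • E3 + lam • E4 + mu • E1
      · intro c hc lam mu
        have hIH := hc lam mu
        have hD' : D (cev br (sc lam) (e a) (cev mul (sc mu) (e b) c))
            = D (cev mul (sc (lam + mu)) (cev br (sc lam) (e a) (e b)) c)
              + D (cev mul (sc mu) (e b) (cev br (sc lam) (e a) c)) := by
          rw [hIH, map_add]
        simp only [cev_DR_sc hmulFs hmulSesq, cev_DR_sc hbrFs hbrSesq,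
          cev_addR hbrBil hbrFs, cev_addR hmulBil hmulFs,
          cev_smulR hbrBil hbrFs, cev_smulR hmulBil hmulFs]
        linear_combination (norm := module) hD' + (lam + mu) • hIH
    · intro b hb c lam mu
      have hIH := hb c lam mu
      simp only [cev_DL_sc hmulFs hmulSesq, cev_DR_sc hbrFs hbrSesq,
        cev_addL hmulBil hmulFs, cev_smulL hmulBil hmulFs,
        cev_smulR hbrBil hbrFs, cev_smulR hmulBil hmulFs]
      linear_combination (norm := module) (-mu : k) • hIH
  · intro a ha b c lam mu
    have hIH := ha b c lam mu
    simp only [cev_DL_sc hbrFs hbrSesq, cev_smulL hmulBil hmulFs,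
      cev_smulR hmulBil hmulFs]
    linear_combination (norm := module) (-lam : k) • hIH

include hbrBil hbrFs hbrSesq hbrGen in
lemma jac_forward
    (hst : ∀ a b : A, starA a b = circA a b + circA b a)
    (h : ∀ (lam mu : k) (a b c : ℕ →₀ A),
      cev br (sc lam) a (cev br (sc mu) b c)
        = cev br (sc (lam + mu)) (cev br (sc lam) a b) c
          + cev br (sc mu) b (cev br (sc lam) a c)) :
    (∀ a b c : A, circA (circA a b) c = circA (circA a c) b) ∧
    (∀ a b c : A, circA (circA a b) c - circA a (circA b c)
      = circA (circA b a) c - circA b (circA a c)) := by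
  have ext6 : ∀ a b c : A,
      circA (circA c b) a = circA (circA c a) b ∧
      starA c (circA b a) = starA (circA c a) b := by
    intro a b c
    have key : ∀ mu : k,
        D (D (e (circA (circA c b) a))) + mu • D (e (circA (starA c b) a))
          + (mu * mu) • (0 : ℕ →₀ A)
        = D (D (e (circA (circA c a) b)))
          + mu • (-(D (e (circA c (circA b a)))) + D (e (starA (circA c a) b))
              + D (e (circA (circA c a) b)))
          + (mu * mu) • (-(e (starA c (circA b a))) + e (starA (circA c a) b)) := by
      intro mu
      have h2 := h 0 mu (e a) (e b) (e c)
      simp only [cev_br_gen circA starA br hbrFs hbrGen, sc_apply,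
        cev_addL hbrBil hbrFs, cev_addR hbrBil hbrFs,
        cev_smulL hbrBil hbrFs, cev_smulR hbrBil hbrFs,
        cev_DL_sc hbrFs hbrSesq, cev_DR_sc hbrFs hbrSesq,
        map_add, map_smul, zero_add, add_zero, zero_smul, smul_zero] at h2
      linear_combination (norm := module) h2
    obtain ⟨k0, -, k2⟩ := ext_deg2 key
    constructor
    · exact e_inj (D_inj (k := k) (D_inj (k := k) k0))
    · have : e (starA c (circA b a)) = e (starA (circA c a) b) := by
        linear_combination (norm := module) k2
      exact e_inj this
  have hN2 : ∀ a b c : A, circA (circA a b) c = circA (circA a c) b := by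
    intro a b c
    exact (ext6 c b a).1
  refine ⟨hN2, ?_⟩
  intro x y z
  have h6 := (ext6 z y x).2
  simp only [hst] at h6
  linear_combination (norm := module) hN2 x y z + hN2 y z x - h6

include hbrBil hbrFs hbrSesq hbrGen in
lemma jac_backward
    (hst : ∀ a b : A, starA a b = circA a b + circA b a)
    (hN2 : ∀ a b c : A, circA (circA a b) c = circA (circA a c) b)
    (hN1 : ∀ a b c : A, circA (circA a b) c - circA a (circA b c)
      = circA (circA b a) c - circA b (circA a c)) :
    ∀ (lam mu : k) (a b c : ℕ →₀ A),
      cev br (sc lam) a (cev br (sc mu) b c)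
        = cev br (sc (lam + mu)) (cev br (sc lam) a b) c
          + cev br (sc mu) b (cev br (sc lam) a c) := by
  have hS : ∀ x y z : A,
      circA (circA x y) z + circA z (circA x y)
        = circA x (circA z y) + circA (circA z y) x := by
    intro x y z
    linear_combination (norm := module) hN2 x y z + hN2 z x y - hN1 z x y
  suffices main : ∀ a b c : (ℕ →₀ A), ∀ lam mu : k,
      cev br (sc lam) a (cev br (sc mu) b c)
        = cev br (sc (lam + mu)) (cev br (sc lam) a b) c
          + cev br (sc mu) b (cev br (sc lam) a c) by
    intro lam mu a b c; exact main a b c lam mu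
  refine gen_ind (k := k) ?_ ?_ ?_ ?_
  · intro b c lam mu
    simp only [cev_zeroL hbrBil, cev_zeroR hbrBil, add_zero, zero_add]
  · intro x x' hx hx' b c lam mu
    simp only [cev_addL hbrBil hbrFs, cev_addR hbrBil hbrFs]
    rw [hx, hx']
    abel
  · intro a
    refine gen_ind (k := k) ?_ ?_ ?_ ?_
    · intro c lam mu
      simp only [cev_zeroL hbrBil, cev_zeroR hbrBil, add_zero, zero_add]
    · intro y y' hy hy' c lam mu
      simp only [cev_addL hbrBil hbrFs, cev_addR hbrBil hbrFs]
      rw [hy, hy']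
      abel
    · intro b
      refine gen_ind (k := k) ?_ ?_ ?_ ?_
      · intro lam mu
        simp only [cev_zeroL hbrBil, cev_zeroR hbrBil, add_zero, zero_add]
      · intro z z' hz hz' lam mu
        simp only [cev_addL hbrBil hbrFs, cev_addR hbrBil hbrFs]
        rw [hz, hz']
        abel
      · intro c lam mu
        have PD2 : D (D (e (circA (circA c b) a))) = D (D (e (circA (circA c a) b))) := by
          rw [hN2 c b a]
        have PDS : D (e (circA (circA c b) a)) + D (e (circA a (circA c b)))
            = D (e (circA c (circA a b))) + D (e (circA (circA a b) c)) := by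
          have := congrArg (fun x => D (e x)) (hS c b a)
          simpa only [map_add] using this
        have PDN2cba : D (e (circA (circA c b) a)) = D (e (circA (circA c a) b)) := by
          rw [hN2 c b a]
        have PDN2abc : D (e (circA (circA a b) c)) = D (e (circA (circA a c) b)) := by
          rw [hN2 a b c]
        have PDN1bca : D (e (circA (circA b c) a)) - D (e (circA b (circA c a)))
            = D (e (circA (circA c b) a)) - D (e (circA c (circA b a))) := by
          have := congrArg (fun x => D (e x)) (hN1 b c a)
          simpa only [map_sub] using this
        have PeS1 : e (circA (circA c b) a) + e (circA a (circA c b))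
            = e (circA c (circA a b)) + e (circA (circA a b) c) := by
          have := congrArg (fun x => e x) (hS c b a)
          simpa only [map_add] using this
        have PeS2 : e (circA (circA b c) a) + e (circA a (circA b c))
            = e (circA b (circA a c)) + e (circA (circA a c) b) := by
          have := congrArg (fun x => e x) (hS b c a)
          simpa only [map_add] using this
        have PeS3 : e (circA (circA c a) b) + e (circA b (circA c a))
            = e (circA c (circA b a)) + e (circA (circA b a) c) := by
          have := congrArg (fun x => e x) (hS c a b)
          simpa only [map_add] using this
        have PeS4 : e (circA (circA a c) b) + e (circA b (circA a c))
            = e (circA a (circA b c)) + e (circA (circA b c) a) := by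
          have := congrArg (fun x => e x) (hS a c b)
          simpa only [map_add] using this
        have PeN1abc : e (circA (circA a b) c) - e (circA a (circA b c))
            = e (circA (circA b a) c) - e (circA b (circA a c)) := by
          have := congrArg (fun x => e x) (hN1 a b c)
          simpa only [map_sub] using this
        have PeN2acb : e (circA (circA a c) b) = e (circA (circA a b) c) := by
          rw [hN2 a c b]
        have PeN2bac : e (circA (circA b a) c) = e (circA (circA b c) a) := by
          rw [hN2 b a c]
        simp only [cev_br_gen circA starA br hbrFs hbrGen, sc_apply,
          cev_addL hbrBil hbrFs, cev_addR hbrBil hbrFs,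
          cev_smulL hbrBil hbrFs, cev_smulR hbrBil hbrFs,
          cev_DL_sc hbrFs hbrSesq, cev_DR_sc hbrFs hbrSesq,
          map_add, map_smul]
        simp only [hst, map_add, LinearMap.add_apply]
        linear_combination (norm := module) PD2
          + lam • (PDS + PDN2cba + PDN2abc)
          + mu • ((2 : k) • PDN2cba + PDN1bca)
          + (lam * lam) • PeS1
          + (lam * mu) • (PeS1 + PeS2 - PeS3 - PeS4 + PeN1abc + PeN2acb + PeN2bac)
          + (mu * mu) • (-PeS3)
      · intro c hc lam mu
        have hIH := hc lam mu
        have hD' : D (cev br (sc lam) (e a) (cev br (sc mu) (e b) c))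
            = D (cev br (sc (lam + mu)) (cev br (sc lam) (e a) (e b)) c)
              + D (cev br (sc mu) (e b) (cev br (sc lam) (e a) c)) := by
          rw [hIH, map_add]
        simp only [cev_DR_sc hbrFs hbrSesq, cev_addR hbrBil hbrFs,
          cev_smulR hbrBil hbrFs]
        linear_combination (norm := module) hD' + (lam + mu) • hIH
    · intro b hb c lam mu
      have hIH := hb c lam mu
      simp only [cev_DL_sc hbrFs hbrSesq, cev_DR_sc hbrFs hbrSesq,
        cev_addL hbrBil hbrFs, cev_smulL hbrBil hbrFs,
        cev_smulR hbrBil hbrFs]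
      linear_combination (norm := module) (-mu : k) • hIH
  · intro a ha b c lam mu
    have hIH := ha b c lam mu
    simp only [cev_DL_sc hbrFs hbrSesq, cev_smulL hbrBil hbrFs,
      cev_smulR hbrBil hbrFs]
    linear_combination (norm := module) (-lam : k) • hIH

end Red
end Main

end Stmt8Aux

open Stmt8Aux in
/-- On the free `k[∂]`-module `P = k[∂] ⊗ A`, the operations extending
`[a_λ b] = ∂(b∘a) + λ(b⋆a)` and `a_λ b = a·b` give a Poisson conformal
algebra if and only if `(A, ∘, ·)` is a differential Novikov-Poisson algebra
and `a⋆b = a∘b + b∘a`. -/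
theorem stmt8 {k A : Type*} [Field k] [CharZero k] [AddCommGroup A] [Module k A]
    (circA mulA starA : A →ₗ[k] A →ₗ[k] A)
    (br mul : ℕ → (ℕ →₀ A) → (ℕ →₀ A) → (ℕ →₀ A))
    (hbrBil : BilinMap k br) (hmulBil : BilinMap k mul)
    (hbrFs : FinSuppFam br) (hmulFs : FinSuppFam mul)
    (hbrSesq : ConfSesq (shft k A) (shft k A) br)
    (hmulSesq : ConfSesq (shft k A) (shft k A) mul)
    -- values on the generators:
    (hbrGen : ∀ (lam : k) (a b : A),
      cev br (sc lam) (emb k A a) (emb k A b)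
        = shft k A (emb k A (circA b a)) + lam • emb k A (starA b a))
    (hmulGen : ∀ (lam : k) (a b : A),
      cev mul (sc lam) (emb k A a) (emb k A b) = emb k A (mulA a b)) :
    IsPoissonConf (shft k A) br mul ↔
      (IsDNPAlg circA mulA ∧ ∀ a b : A, starA a b = circA a b + circA b a) := by
  constructor
  · rintro ⟨⟨-, -, -, hskew, hjac⟩, ⟨-, -, -, hcomm, hassoc⟩, hleib⟩
    have hst := (skew_red (circA := circA) (starA := starA) (br := br)
      hbrBil hbrFs hbrSesq hbrGen).1 hskew
    have hcm := (comm_red (mulA := mulA) (mul := mul)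
      hmulBil hmulFs hmulSesq hmulGen).1 hcomm
    have has := (assoc_red (mulA := mulA) (mul := mul)
      hmulBil hmulFs hmulSesq hmulGen).1 hassoc
    obtain ⟨hN2, hN1⟩ := jac_forward (circA := circA) (starA := starA) (br := br)
      hbrBil hbrFs hbrSesq hbrGen hst hjac
    have hleibs := leib_forward (circA := circA) (mulA := mulA) (starA := starA)
      (br := br) (mul := mul) hbrBil hmulBil hbrFs hmulFs hbrSesq hmulSesq
      hbrGen hmulGen hleib
    refine ⟨⟨⟨hN1, hN2⟩, ⟨hcm, has⟩, ?_, ?_⟩, hst⟩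
    · intro a b c
      exact (hleibs c a b).1
    · intro a b c
      have t2 := (hleibs a b c).2.2
      have t3 := (hleibs a b c).1
      simp only [hst, map_add, LinearMap.add_apply] at t2
      linear_combination (norm := module) t2 - t3
  · rintro ⟨⟨⟨hn1, hn2⟩, ⟨hcm, has⟩, hd3, hd4⟩, hst⟩
    have hG3 : ∀ a b c : A, circA (mulA b c) a = mulA b (circA c a) :=
      fun a b c => hd3 b c a
    have hG1 : ∀ a b c : A, mulA (circA b a) c = mulA b (circA c a) := by
      intro a b c
      rw [hcm (circA b a) c, ← hd3 c b a, hcm c b, hd3 b c a]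
    refine ⟨⟨hbrBil, hbrFs, hbrSesq, ?_, ?_⟩, ⟨hmulBil, hmulFs, hmulSesq, ?_, ?_⟩, ?_⟩
    · exact (skew_red (circA := circA) (starA := starA) (br := br)
        hbrBil hbrFs hbrSesq hbrGen).2 hst
    · exact jac_backward (circA := circA) (starA := starA) (br := br)
        hbrBil hbrFs hbrSesq hbrGen hst hn2 hn1
    · exact (comm_red (mulA := mulA) (mul := mul)
        hmulBil hmulFs hmulSesq hmulGen).2 hcm
    · exact (assoc_red (mulA := mulA) (mul := mul)
        hmulBil hmulFs hmulSesq hmulGen).2 has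
    · exact leib_backward (circA := circA) (mulA := mulA) (starA := starA)
        (br := br) (mul := mul) hbrBil hmulBil hbrFs hmulFs hbrSesq hmulSesq
        hbrGen hmulGen hst hG1 hG3 hd4
end
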